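/- arXiv:1704.01192 — 5 statements merged into one kernel-verified Lean document; each statement's English description precedes it below -/
import Mathlib

section
/- Let 𝒞 be an admissible set of relations, T(R) a tableau satisfying 𝒞, and z⁽¹⁾, z⁽²⁾ ∈ ℤ^{n(n−1)/2} integer shift vectors (supported on rows 1,…,n−1). Let I₁ = {(i,j) : z⁽¹⁾_{ij} ≠ 0} and I₂ = {(i,j) : z⁽²⁾_{ij} ≠ 0}. If I₁ ∩ I₂ = ∅ and for every (i₁,j₁) ∈ I₁ and (i₂,j₂) ∈ I₂ neither (i₁,j₁) ⪰_𝒞 (i₂,j₂) nor (i₂,j₂) ⪰_𝒞 (i₁,j₁) holds, then T(R+z⁽¹⁾+z⁽²⁾) satisfies 𝒞 if and only if both T(R+z⁽¹⁾) and T(R+z⁽²⁾) satisfy 𝒞. -/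
/- Common setup: relations between boxes of Gelfand–Tsetlin tableaux,
admissible sets of relations, tableaux satisfying relations, and the
Gelfand–Tsetlin operators on the space with basis `ℬ_𝒞(T(L))`. -/

noncomputable section

namespace GT

/-- A relation `src ≥ tgt` (`strict = false`) or `src > tgt` (`strict = true`)
between two boxes of a Gelfand–Tsetlin tableau. -/
structure GTRel where
  src : ℕ × ℕ
  tgt : ℕ × ℕ
  strict : Bool

/-- The set ℛ = ℛ^≥ ∪ ℛ^> ∪ ℛ⁰ of relations. -/
def RelSet (n : ℕ) : Set GTRel :=
  {r | (∃ i j j' : ℕ, 1 ≤ j ∧ j ≤ i ∧ i ≤ n ∧ 1 ≤ j' ∧ j' ≤ i - 1 ∧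
          r = ⟨(i, j), (i - 1, j'), false⟩) ∨
       (∃ i j j' : ℕ, 1 ≤ j ∧ j ≤ i ∧ i ≤ n ∧ 1 ≤ j' ∧ j' ≤ i - 1 ∧
          r = ⟨(i - 1, j'), (i, j), true⟩) ∨
       (∃ i j : ℕ, 1 ≤ i ∧ i ≤ n ∧ 1 ≤ j ∧ j ≤ n ∧ i ≠ j ∧
          r = ⟨(n, i), (n, j), false⟩)}

/-- The set 𝔙(𝒞) of vertices occurring in relations of `C`. -/
def vertexSet (C : Set GTRel) : Set (ℕ × ℕ) :=
  {v | ∃ r ∈ C, r.src = v ∨ r.tgt = v}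

/-- Two sets of relations are disconnected if their vertex sets are disjoint. -/
def Disconnected (C₁ C₂ : Set GTRel) : Prop :=
  vertexSet C₁ ∩ vertexSet C₂ = ∅

/-- A nonempty set of relations is indecomposable if it is not the union of two
nonempty disconnected subsets. -/
def Indecomposable (C : Set GTRel) : Prop :=
  C.Nonempty ∧ ∀ C₁ C₂ : Set GTRel, C₁.Nonempty → C₂.Nonempty →
    Disconnected C₁ C₂ → C ≠ C₁ ∪ C₂

/-- `D` is an indecomposable component of `C`. -/
def IsComponent (C D : Set GTRel) : Prop :=
  D ⊆ C ∧ Indecomposable D ∧ Disconnected D (C \ D)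

/-- One step along a relation of `C`. -/
def stepRel (C : Set GTRel) (a b : ℕ × ℕ) : Prop :=
  ∃ r ∈ C, r.src = a ∧ r.tgt = b

/-- One step along a strict relation of `C`. -/
def strictStepRel (C : Set GTRel) (a b : ℕ × ℕ) : Prop :=
  ∃ r ∈ C, r.src = a ∧ r.tgt = b ∧ r.strict = true

/-- `a ⪰_𝒞 b` : there is a (nonempty) chain of relations of `C` from `a` to `b`. -/
def Succeq (C : Set GTRel) : ℕ × ℕ → ℕ × ℕ → Prop :=
  Relation.TransGen (stepRel C)

/-- `a ≻_𝒞 b` : there is a chain of relations of `C` from `a` to `b` in which at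
least one relation is strict. -/
def Succ (C : Set GTRel) (a b : ℕ × ℕ) : Prop :=
  ∃ c d, Relation.ReflTransGen (stepRel C) a c ∧ strictStepRel C c d ∧
    Relation.ReflTransGen (stepRel C) d b

/-- An indecomposable set of relations is admissible. -/
def AdmissibleIndec (n : ℕ) (C : Set GTRel) : Prop :=
  Indecomposable C ∧
  (∀ k i j : ℕ, Succ C (k, i) (k, j) → i < j) ∧
  (∀ i j : ℕ, Succeq C (n, i) (n, j) → i < j) ∧
  (¬ ∃ k i j s t : ℕ, i < j ∧ s < t ∧
      (⟨(k, i), (k - 1, t), false⟩ : GTRel) ∈ C ∧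
      (⟨(k - 1, s), (k, j), true⟩ : GTRel) ∈ C) ∧
  (∀ k i j : ℕ, 1 ≤ k → k ≤ n - 1 →
      (k, i) ∈ vertexSet C → (k, j) ∈ vertexSet C →
      ∃ s t : ℕ, s < t ∧
        (((⟨(k, i), (k + 1, s), true⟩ : GTRel) ∈ C ∧
          (⟨(k + 1, s), (k, j), false⟩ : GTRel) ∈ C ∧
          (⟨(k, i), (k - 1, t), false⟩ : GTRel) ∈ C ∧
          (⟨(k - 1, t), (k, j), true⟩ : GTRel) ∈ C) ∨
         ((⟨(k, i), (k + 1, s), true⟩ : GTRel) ∈ C ∧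
          (⟨(k + 1, t), (k, j), false⟩ : GTRel) ∈ C)))

/-- An arbitrary set of relations is admissible iff all of its indecomposable
components are admissible. -/
def Admissible (n : ℕ) (C : Set GTRel) : Prop :=
  ∀ D, IsComponent C D → AdmissibleIndec n D

/-- `q^x := e^{t x}` where `t` is a fixed logarithm of `q`. -/
def qpow (t x : ℂ) : ℂ := Complex.exp (t * x)

/-- The quantum number `[x]_q = (q^x - q^{-x})/(q - q⁻¹)`. -/
def qnum (q t x : ℂ) : ℂ := (qpow t x - qpow t (-x)) / (q - q⁻¹)

/-- `1(q) = {x : ℂ | q^x = 1}`. -/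
def oneQ (t : ℂ) : Set ℂ := {x | qpow t x = 1}

/-- `ℤ_{≥0} + ½·1(q)`. -/
def intGeHalf (t : ℂ) : Set ℂ := {x | ∃ m : ℤ, 0 ≤ m ∧ ∃ y ∈ oneQ t, x = m + y / 2}

/-- `ℤ_{>0} + ½·1(q)`. -/
def intGtHalf (t : ℂ) : Set ℂ := {x | ∃ m : ℤ, 0 < m ∧ ∃ y ∈ oneQ t, x = m + y / 2}

/-- `ℤ + ½·1(q)`. -/
def intHalf (t : ℂ) : Set ℂ := {x | ∃ m : ℤ, ∃ y ∈ oneQ t, x = m + y / 2}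

/-- `1 + ½·1(q)`. -/
def onePlusHalf (t : ℂ) : Set ℂ := {x | ∃ y ∈ oneQ t, x = 1 + y / 2}

/-- A tableau `L` satisfies a single relation `r`. -/
def SatisfiesRel (t : ℂ) (L : ℕ × ℕ → ℂ) (r : GTRel) : Prop :=
  L r.src - L r.tgt ∈ (if r.strict then intGtHalf t else intGeHalf t)

/-- `a` and `b` lie in the same indecomposable component of `𝔙(𝒞)`. -/
def SameComponent (C : Set GTRel) (a b : ℕ × ℕ) : Prop :=
  a ∈ vertexSet C ∧ b ∈ vertexSet C ∧
  Relation.ReflTransGen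
    (fun x y => ∃ r ∈ C, (r.src = x ∨ r.tgt = x) ∧ (r.src = y ∨ r.tgt = y)) a b

/-- A tableau `L` satisfies the set of relations `C` (is a `C`-realization). -/
def SatisfiesSet (n : ℕ) (t : ℂ) (C : Set GTRel) (L : ℕ × ℕ → ℂ) : Prop :=
  (∀ r ∈ C, SatisfiesRel t L r) ∧
  (∀ k i j : ℕ, 1 ≤ i → i ≤ k → 1 ≤ j → j ≤ k → k ≤ n → i ≠ j →
    L (k, i) - L (k, j) ∈ intHalf t → SameComponent C (k, i) (k, j))

/-- An integer shift vector supported on rows `1, …, n-1`. -/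
def IsShift (n : ℕ) (z : ℕ × ℕ → ℤ) : Prop :=
  ∀ p : ℕ × ℕ, z p ≠ 0 → 1 ≤ p.2 ∧ p.2 ≤ p.1 ∧ p.1 ≤ n - 1

/-- The shifted tableau `L + z`. -/
def addShift (L : ℕ × ℕ → ℂ) (z : ℕ × ℕ → ℤ) : ℕ × ℕ → ℂ :=
  fun p => L p + z p

/-- `ℬ_𝒞(T(L))` : the integer shifts of `L` (rows `1,…,n-1`) satisfying `C`. -/
def BSet (n : ℕ) (t : ℂ) (C : Set GTRel) (L : ℕ × ℕ → ℂ) : Set (ℕ × ℕ → ℂ) :=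
  {R | (∃ z, IsShift n z ∧ R = addShift L z) ∧ SatisfiesSet n t C R}

/-- The tableau `δ^{kj}`. -/
def deltaT (k j : ℕ) : ℕ × ℕ → ℂ := fun p => if p = (k, j) then 1 else 0

/-- The coefficient `e_{kj}(R)` of `T(R + δ^{kj})` in `e_k T(R)`. -/
def ecoeff (q t : ℂ) (k j : ℕ) (R : ℕ × ℕ → ℂ) : ℂ :=
  -(∏ i ∈ Finset.Icc 1 (k + 1), qnum q t (R (k, j) - R (k + 1, i))) /
    ∏ i ∈ (Finset.Icc 1 k).erase j, qnum q t (R (k, j) - R (k, i))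

/-- The coefficient `f_{kj}(R)` of `T(R - δ^{kj})` in `f_k T(R)`. -/
def fcoeff (q t : ℂ) (k j : ℕ) (R : ℕ × ℕ → ℂ) : ℂ :=
  (∏ i ∈ Finset.Icc 1 (k - 1), qnum q t (R (k, j) - R (k - 1, i))) /
    ∏ i ∈ (Finset.Icc 1 k).erase j, qnum q t (R (k, j) - R (k, i))

open scoped Classical in
/-- The basis vector of `V` attached to a tableau, `0` if the tableau is not in the basis. -/
def tabVec (B : Set (ℕ × ℕ → ℂ)) (x : ℕ × ℕ → ℂ) : ↥B →₀ ℂ :=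
  if h : x ∈ B then Finsupp.single ⟨x, h⟩ 1 else 0

/-- Linear extension of a map defined on basis tableaux. -/
def extendLin {B : Set (ℕ × ℕ → ℂ)} (g : ↥B → (↥B →₀ ℂ)) :
    (↥B →₀ ℂ) →ₗ[ℂ] (↥B →₀ ℂ) :=
  Finsupp.lsum ℂ fun R => (LinearMap.id : ℂ →ₗ[ℂ] ℂ).smulRight (g R)

/-- The Gelfand–Tsetlin operator `e_k`. -/
def eOp (q t : ℂ) (B : Set (ℕ × ℕ → ℂ)) (k : ℕ) : (↥B →₀ ℂ) →ₗ[ℂ] (↥B →₀ ℂ) :=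
  extendLin fun R => ∑ j ∈ Finset.Icc 1 k,
    ecoeff q t k j R.1 • tabVec B (R.1 + deltaT k j)

/-- The Gelfand–Tsetlin operator `f_k`. -/
def fOp (q t : ℂ) (B : Set (ℕ × ℕ → ℂ)) (k : ℕ) : (↥B →₀ ℂ) →ₗ[ℂ] (↥B →₀ ℂ) :=
  extendLin fun R => ∑ j ∈ Finset.Icc 1 k,
    fcoeff q t k j R.1 • tabVec B (R.1 - deltaT k j)

/-- The weight `a_k(R) = Σ_{i=1}^k r_{ki} - Σ_{i=1}^{k-1} r_{k-1,i} + k`. -/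
def aWeight (k : ℕ) (R : ℕ × ℕ → ℂ) : ℂ :=
  (∑ i ∈ Finset.Icc 1 k, R (k, i)) - (∑ i ∈ Finset.Icc 1 (k - 1), R (k - 1, i)) + k

/-- The Gelfand–Tsetlin operator `q^{ε_k}`. -/
def qepsOp (t : ℂ) (B : Set (ℕ × ℕ → ℂ)) (k : ℕ) : (↥B →₀ ℂ) →ₗ[ℂ] (↥B →₀ ℂ) :=
  extendLin fun R => qpow t (aWeight k R.1) • tabVec B R.1

/-- The Gelfand–Tsetlin operator `q^{-ε_k}`, inverse of `q^{ε_k}`. -/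
def qepsInvOp (t : ℂ) (B : Set (ℕ × ℕ → ℂ)) (k : ℕ) : (↥B →₀ ℂ) →ₗ[ℂ] (↥B →₀ ℂ) :=
  extendLin fun R => qpow t (-aWeight k R.1) • tabVec B R.1

/-- All the defining relations of `U_q(gl_n)` hold for the Gelfand–Tsetlin
operators on the space with basis `B`. -/
def UqRelationsHold (n : ℕ) (q t : ℂ) (B : Set (ℕ × ℕ → ℂ)) : Prop :=
  (∀ k, 1 ≤ k → k ≤ n →
     qepsOp t B k ∘ₗ qepsInvOp t B k = LinearMap.id ∧
     qepsInvOp t B k ∘ₗ qepsOp t B k = LinearMap.id) ∧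
  (∀ k l, 1 ≤ k → k ≤ n → 1 ≤ l → l ≤ n →
     qepsOp t B k ∘ₗ qepsOp t B l = qepsOp t B l ∘ₗ qepsOp t B k) ∧
  (∀ k l, 1 ≤ k → k ≤ n → 1 ≤ l → l ≤ n - 1 →
     qepsOp t B k ∘ₗ eOp q t B l ∘ₗ qepsInvOp t B k =
       qpow t ((if k = l then 1 else 0) - (if k = l + 1 then 1 else 0)) • eOp q t B l) ∧
  (∀ k l, 1 ≤ k → k ≤ n → 1 ≤ l → l ≤ n - 1 →
     qepsOp t B k ∘ₗ fOp q t B l ∘ₗ qepsInvOp t B k =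
       qpow t (-((if k = l then 1 else 0) - (if k = l + 1 then 1 else 0))) • fOp q t B l) ∧
  (∀ i j, 1 ≤ i → i ≤ n - 1 → 1 ≤ j → j ≤ n - 1 →
     eOp q t B i ∘ₗ fOp q t B j - fOp q t B j ∘ₗ eOp q t B i =
       if i = j then
         (q - q⁻¹)⁻¹ •
           (qepsOp t B i ∘ₗ qepsInvOp t B (i + 1) -
             qepsInvOp t B i ∘ₗ qepsOp t B (i + 1))
       else 0) ∧
  (∀ i j, 1 ≤ i → i ≤ n - 1 → 1 ≤ j → j ≤ n - 1 → |(i : ℤ) - (j : ℤ)| = 1 →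
     eOp q t B i ∘ₗ eOp q t B i ∘ₗ eOp q t B j -
         (q + q⁻¹) • (eOp q t B i ∘ₗ eOp q t B j ∘ₗ eOp q t B i) +
         eOp q t B j ∘ₗ eOp q t B i ∘ₗ eOp q t B i = 0 ∧
     fOp q t B i ∘ₗ fOp q t B i ∘ₗ fOp q t B j -
         (q + q⁻¹) • (fOp q t B i ∘ₗ fOp q t B j ∘ₗ fOp q t B i) +
         fOp q t B j ∘ₗ fOp q t B i ∘ₗ fOp q t B i = 0) ∧
  (∀ i j, 1 ≤ i → i ≤ n - 1 → 1 ≤ j → j ≤ n - 1 → 1 < |(i : ℤ) - (j : ℤ)| →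
     eOp q t B i ∘ₗ eOp q t B j = eOp q t B j ∘ₗ eOp q t B i ∧
     fOp q t B i ∘ₗ fOp q t B j = fOp q t B j ∘ₗ fOp q t B i)

/-- A set of relations is realizable if for every tableau satisfying it, the
Gelfand–Tsetlin formulas define a `U_q(gl_n)`-module structure. -/
def Realizable (n : ℕ) (q t : ℂ) (C : Set GTRel) : Prop :=
  ∀ L : ℕ × ℕ → ℂ, SatisfiesSet n t C L → UqRelationsHold n q t (BSet n t C L)

/-- `C` implies `C'`. -/
def Implies (C C' : Set GTRel) : Prop :=
  (∀ a b, Succ C' a b → Succ C a b) ∧ (∀ a b, Succeq C' a b → Succeq C a b)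

/-- `C` is a maximal set of relations satisfied by `L`. -/
def MaximalFor (n : ℕ) (t : ℂ) (C : Set GTRel) (L : ℕ × ℕ → ℂ) : Prop :=
  SatisfiesSet n t C L ∧
  ∀ C' ⊆ RelSet n, SatisfiesSet n t C' L → Implies C C'

end GT

open GT in
/-- if the supports of `z⁽¹⁾` and `z⁽²⁾` are disjoint and mutually
unrelated in `𝒞`, then `T(R+z⁽¹⁾+z⁽²⁾)` satisfies `𝒞` iff both `T(R+z⁽¹⁾)` and
`T(R+z⁽²⁾)` do. -/
theorem satisfies_add_of_disjoint_supports
    (n : ℕ) (hn : 2 ≤ n) (q t : ℂ) (hq : Complex.exp t = q)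
    (hroot : ∀ m : ℕ, 0 < m → q ^ m ≠ 1)
    (C : Set GTRel) (hC : C ⊆ RelSet n) (hCadm : Admissible n C)
    (R : ℕ × ℕ → ℂ) (hR : SatisfiesSet n t C R)
    (z₁ z₂ : ℕ × ℕ → ℤ) (hz₁ : IsShift n z₁) (hz₂ : IsShift n z₂)
    (hdisj : ∀ p : ℕ × ℕ, ¬ (z₁ p ≠ 0 ∧ z₂ p ≠ 0))
    (hnorel : ∀ p₁ p₂ : ℕ × ℕ, z₁ p₁ ≠ 0 → z₂ p₂ ≠ 0 →
      ¬ Succeq C p₁ p₂ ∧ ¬ Succeq C p₂ p₁) :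
    SatisfiesSet n t C (addShift R (z₁ + z₂)) ↔
      SatisfiesSet n t C (addShift R z₁) ∧ SatisfiesSet n t C (addShift R z₂) := by

  obtain ⟨hR1, hR2⟩ := hR
  have hIntHalf : ∀ (x : ℂ) (m : ℤ), x + m ∈ intHalf t ↔ x ∈ intHalf t := by
    intro x m
    constructor
    · rintro ⟨m', y, hy, hx⟩
      refine ⟨m' - m, y, hy, ?_⟩
      push_cast
      push_cast at hx
      linear_combination hx
    · rintro ⟨m', y, hy, hx⟩
      refine ⟨m' + m, y, hy, ?_⟩
      push_cast
      linear_combination hx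
  have hPart2 : ∀ z : ℕ × ℕ → ℤ, ∀ k i j : ℕ, 1 ≤ i → i ≤ k → 1 ≤ j → j ≤ k →
      k ≤ n → i ≠ j → addShift R z (k, i) - addShift R z (k, j) ∈ intHalf t →
      SameComponent C (k, i) (k, j) := by
    intro z k i j h1 h2 h3 h4 h5 h6 hmem
    apply hR2 k i j h1 h2 h3 h4 h5 h6
    have heq : R (k, i) - R (k, j) =
        (addShift R z (k, i) - addShift R z (k, j)) + ((-(z (k, i) - z (k, j)) : ℤ) : ℂ) := by
      simp only [addShift]
      push_cast
      ring
    rw [heq]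
    exact (hIntHalf _ _).mpr hmem
  have key : ∀ r ∈ C, (z₁ r.src = 0 ∧ z₁ r.tgt = 0) ∨ (z₂ r.src = 0 ∧ z₂ r.tgt = 0) := by
    intro r hr
    by_contra hcon
    push_neg at hcon
    obtain ⟨h1, h2⟩ := hcon
    have hs : Succeq C r.src r.tgt := Relation.TransGen.single ⟨r, hr, rfl, rfl⟩
    have h1' : z₁ r.src ≠ 0 ∨ z₁ r.tgt ≠ 0 := by
      rcases eq_or_ne (z₁ r.src) 0 with e | e
      · exact Or.inr (h1 e)
      · exact Or.inl e
    have h2' : z₂ r.src ≠ 0 ∨ z₂ r.tgt ≠ 0 := by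
      rcases eq_or_ne (z₂ r.src) 0 with e | e
      · exact Or.inr (h2 e)
      · exact Or.inl e
    rcases h1' with e1 | e1 <;> rcases h2' with e2 | e2
    · exact hdisj r.src ⟨e1, e2⟩
    · exact (hnorel r.src r.tgt e1 e2).1 hs
    · exact (hnorel r.tgt r.src e1 e2).2 hs
    · exact hdisj r.tgt ⟨e1, e2⟩
  have relEquiv : ∀ r ∈ C, (SatisfiesRel t (addShift R (z₁ + z₂)) r ↔
      SatisfiesRel t (addShift R z₁) r ∧ SatisfiesRel t (addShift R z₂) r) := by
    intro r hr
    have hRr := hR1 r hr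
    rcases key r hr with ⟨e1, e2⟩ | ⟨e1, e2⟩
    · have hA : addShift R (z₁ + z₂) r.src - addShift R (z₁ + z₂) r.tgt =
          addShift R z₂ r.src - addShift R z₂ r.tgt := by
        simp only [addShift, Pi.add_apply, e1, e2]
        push_cast
        ring
      have hB : addShift R z₁ r.src - addShift R z₁ r.tgt = R r.src - R r.tgt := by
        simp [addShift, e1, e2]
      unfold SatisfiesRel at hRr ⊢
      rw [hA, hB]
      exact ⟨fun h => ⟨hRr, h⟩, fun h => h.2⟩
    · have hA : addShift R (z₁ + z₂) r.src - addShift R (z₁ + z₂) r.tgt =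
          addShift R z₁ r.src - addShift R z₁ r.tgt := by
        simp only [addShift, Pi.add_apply, e1, e2]
        push_cast
        ring
      have hB : addShift R z₂ r.src - addShift R z₂ r.tgt = R r.src - R r.tgt := by
        simp [addShift, e1, e2]
      unfold SatisfiesRel at hRr ⊢
      rw [hA, hB]
      exact ⟨fun h => ⟨h, hRr⟩, fun h => h.1⟩
  constructor
  · intro h
    exact ⟨⟨fun r hr => ((relEquiv r hr).1 (h.1 r hr)).1, hPart2 z₁⟩,
           ⟨fun r hr => ((relEquiv r hr).1 (h.1 r hr)).2, hPart2 z₂⟩⟩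
  · rintro ⟨h1, h2⟩
    exact ⟨fun r hr => (relEquiv r hr).2 ⟨h1.1 r hr, h2.1 r hr⟩, hPart2 (z₁ + z₂)⟩
end
end

section
/- Let 𝒞 be an admissible set of relations (a union of pairwise disconnected indecomposable admissible sets) and T(L) a 𝒞-realization. Then for all 1 ≤ i, j ≤ n−1 with i ≠ j the Gelfand–Tsetlin operators on V_𝒞(T(L)) satisfy e_i f_j = f_j e_i. -/
/- Common setup: relations between boxes of Gelfand–Tsetlin tableaux,
admissible sets of relations, tableaux satisfying relations, and the
Gelfand–Tsetlin operators on the space with basis `ℬ_𝒞(T(L))`. -/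

noncomputable section

open GT
open scoped Classical

namespace GTAux
variable {q t : ℂ} {B : Set (ℕ × ℕ → ℂ)}

lemma qnum_neg (q t x : ℂ) : qnum q t (-x) = - qnum q t x := by
  unfold qnum
  rw [neg_neg, ← neg_sub, neg_div]

lemma extendLin_single (g : ↥B → (↥B →₀ ℂ)) (R : ↥B) :
    extendLin g (Finsupp.single R 1) = g R := by
  simp [extendLin]

lemma extendLin_tabVec (g : ↥B → (↥B →₀ ℂ)) (x : ℕ × ℕ → ℂ) :
    extendLin g (tabVec B x) = if h : x ∈ B then g ⟨x, h⟩ else 0 := by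
  unfold tabVec
  split
  · rw [extendLin_single]
  · rw [map_zero]

lemma mem_S_add_one {t : ℂ} {s : Bool} {x : ℂ}
    (h : x ∈ (if s = true then intGtHalf t else intGeHalf t)) :
    x + 1 ∈ (if s = true then intGtHalf t else intGeHalf t) := by
  cases s <;> simp only [if_true, if_false, Bool.false_eq_true] at * <;>
  · obtain ⟨m, hm, y, hy, hx⟩ := h
    exact ⟨m + 1, by omega, y, hy, by rw [hx]; push_cast; ring⟩

lemma intHalf_of_add_int {t : ℂ} {x : ℂ} (m : ℤ) (h : x + (m : ℂ) ∈ intHalf t) :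
    x ∈ intHalf t := by
  obtain ⟨m', y, hy, hx⟩ := h
  exact ⟨m' - m, y, hy, by push_cast; linear_combination hx⟩

lemma mem_BSet_of {n : ℕ} {t : ℂ} {C : Set GTRel} {L X : ℕ × ℕ → ℂ}
    (hL : SatisfiesSet n t C L) (z : ℕ × ℕ → ℤ) (hz : IsShift n z)
    (hX : X = addShift L z) (hrel : ∀ r ∈ C, SatisfiesRel t X r) :
    X ∈ BSet n t C L := by
  refine ⟨⟨z, hz, hX⟩, hrel, ?_⟩
  intro k i' j' h1 h2 h3 h4 h5 h6 hmem
  apply hL.2 k i' j' h1 h2 h3 h4 h5 h6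
  apply intHalf_of_add_int (z (k, i') - z (k, j'))
  have heq : L (k, i') - L (k, j') + ((z (k, i') - z (k, j') : ℤ) : ℂ)
      = X (k, i') - X (k, j') := by
    rw [hX]; simp only [addShift]; push_cast; ring
  rw [heq]; exact hmem

end GTAux

namespace GTAux

lemma inter_mem_sub {n : ℕ} {t : ℂ} {C : Set GTRel} {L : ℕ × ℕ → ℂ}
    (hL : SatisfiesSet n t C L) {i j a b : ℕ} (hij : i ≠ j) (hj : j ≤ n - 1)
    (hb1 : 1 ≤ b) (hbj : b ≤ j) {R : ℕ × ℕ → ℂ} (hR : R ∈ BSet n t C L)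
    (hT : R + deltaT i a - deltaT j b ∈ BSet n t C L) :
    R - deltaT j b ∈ BSet n t C L := by
  obtain ⟨⟨z, hz, hRz⟩, hRsat, -⟩ := hR
  have hjbia : ((j, b) : ℕ × ℕ) ≠ (i, a) := fun h => hij (congrArg Prod.fst h).symm
  have hiajb : ((i, a) : ℕ × ℕ) ≠ (j, b) := fun h => hij (congrArg Prod.fst h)
  have e_jj : (if ((j, b) : ℕ × ℕ) = (j, b) then (1 : ℂ) else 0) = 1 := if_pos rfl
  have e_ji : (if ((j, b) : ℕ × ℕ) = (i, a) then (1 : ℂ) else 0) = 0 := if_neg hjbia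
  have e_ij : (if ((i, a) : ℕ × ℕ) = (j, b) then (1 : ℂ) else 0) = 0 := if_neg hiajb
  have e_ii : (if ((i, a) : ℕ × ℕ) = (i, a) then (1 : ℂ) else 0) = 1 := if_pos rfl
  apply mem_BSet_of hL (fun p => z p - (if p = (j, b) then 1 else 0))
  · intro p hp
    replace hp : z p - (if p = (j, b) then 1 else 0) ≠ 0 := hp
    by_cases hpj : p = (j, b)
    · subst hpj; exact ⟨hb1, hbj, hj⟩
    · rw [if_neg hpj, sub_zero] at hp
      exact hz p hp
  · funext p
    rw [Pi.sub_apply, hRz]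
    simp only [addShift, deltaT]
    split <;> push_cast <;> ring
  · intro r hr
    have hRr := hRsat r hr
    have hTr := hT.2.1 r hr
    unfold SatisfiesRel at hRr hTr ⊢
    have hX : ∀ p : ℕ × ℕ, (R - deltaT j b) p = R p - (if p = (j, b) then 1 else 0) := by
      intro p; rw [Pi.sub_apply]; rfl
    have hTp : ∀ p : ℕ × ℕ,
        (R + deltaT i a - deltaT j b) p
          = R p + (if p = (i, a) then 1 else 0) - (if p = (j, b) then 1 else 0) := by
      intro p; rw [Pi.sub_apply, Pi.add_apply]; rfl
    rw [hX, hX]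
    by_cases h1 : r.src = (j, b) <;> by_cases h2 : r.tgt = (j, b)
    · rw [h1, h2] at hRr ⊢
      rw [e_jj]
      have e : R (j, b) - 1 - (R (j, b) - 1) = R (j, b) - R (j, b) := by ring
      rw [e]; exact hRr
    · have e_t_j : (if r.tgt = (j, b) then (1 : ℂ) else 0) = 0 := if_neg h2
      by_cases h3 : r.tgt = (i, a)
      · rw [hTp, hTp, h1, h3, e_jj, e_ji, e_ij, e_ii] at hTr
        rw [h1, h3, e_jj, e_ij]
        have e : R (j, b) - 1 - (R (i, a) - 0)
            = (R (j, b) + 0 - 1 - (R (i, a) + 1 - 0)) + 1 := by ring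
        rw [e]; exact mem_S_add_one hTr
      · have e_t_i : (if r.tgt = (i, a) then (1 : ℂ) else 0) = 0 := if_neg h3
        rw [hTp, hTp, h1, e_jj, e_ji, e_t_i, e_t_j] at hTr
        rw [h1, e_jj, e_t_j]
        have e : R (j, b) - 1 - (R r.tgt - 0)
            = R (j, b) + 0 - 1 - (R r.tgt + 0 - 0) := by ring
        rw [e]; exact hTr
    · have e_s_j : (if r.src = (j, b) then (1 : ℂ) else 0) = 0 := if_neg h1
      rw [h2] at hRr ⊢
      rw [e_s_j, e_jj]
      have e : R r.src - 0 - (R (j, b) - 1) = (R r.src - R (j, b)) + 1 := by ring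
      rw [e]; exact mem_S_add_one hRr
    · have e_s_j : (if r.src = (j, b) then (1 : ℂ) else 0) = 0 := if_neg h1
      have e_t_j : (if r.tgt = (j, b) then (1 : ℂ) else 0) = 0 := if_neg h2
      rw [e_s_j, e_t_j]
      have e : R r.src - 0 - (R r.tgt - 0) = R r.src - R r.tgt := by ring
      rw [e]; exact hRr

lemma inter_mem_add {n : ℕ} {t : ℂ} {C : Set GTRel} {L : ℕ × ℕ → ℂ}
    (hL : SatisfiesSet n t C L) {i j a b : ℕ} (hij : i ≠ j) (hi : i ≤ n - 1)
    (ha1 : 1 ≤ a) (hai : a ≤ i) {R : ℕ × ℕ → ℂ} (hR : R ∈ BSet n t C L)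
    (hT : R + deltaT i a - deltaT j b ∈ BSet n t C L) :
    R + deltaT i a ∈ BSet n t C L := by
  obtain ⟨⟨z, hz, hRz⟩, hRsat, -⟩ := hR
  have hjbia : ((j, b) : ℕ × ℕ) ≠ (i, a) := fun h => hij (congrArg Prod.fst h).symm
  have hiajb : ((i, a) : ℕ × ℕ) ≠ (j, b) := fun h => hij (congrArg Prod.fst h)
  have e_jj : (if ((j, b) : ℕ × ℕ) = (j, b) then (1 : ℂ) else 0) = 1 := if_pos rfl
  have e_ji : (if ((j, b) : ℕ × ℕ) = (i, a) then (1 : ℂ) else 0) = 0 := if_neg hjbia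
  have e_ij : (if ((i, a) : ℕ × ℕ) = (j, b) then (1 : ℂ) else 0) = 0 := if_neg hiajb
  have e_ii : (if ((i, a) : ℕ × ℕ) = (i, a) then (1 : ℂ) else 0) = 1 := if_pos rfl
  apply mem_BSet_of hL (fun p => z p + (if p = (i, a) then 1 else 0))
  · intro p hp
    replace hp : z p + (if p = (i, a) then 1 else 0) ≠ 0 := hp
    by_cases hpi : p = (i, a)
    · subst hpi; exact ⟨ha1, hai, hi⟩
    · rw [if_neg hpi, add_zero] at hp
      exact hz p hp
  · funext p
    rw [Pi.add_apply, hRz]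
    simp only [addShift, deltaT]
    split <;> push_cast <;> ring
  · intro r hr
    have hRr := hRsat r hr
    have hTr := hT.2.1 r hr
    unfold SatisfiesRel at hRr hTr ⊢
    have hX : ∀ p : ℕ × ℕ, (R + deltaT i a) p = R p + (if p = (i, a) then 1 else 0) := by
      intro p; rw [Pi.add_apply]; rfl
    have hTp : ∀ p : ℕ × ℕ,
        (R + deltaT i a - deltaT j b) p
          = R p + (if p = (i, a) then 1 else 0) - (if p = (j, b) then 1 else 0) := by
      intro p; rw [Pi.sub_apply, Pi.add_apply]; rfl
    rw [hX, hX]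
    by_cases h1 : r.src = (i, a) <;> by_cases h2 : r.tgt = (i, a)
    · rw [h1, h2] at hRr ⊢
      rw [e_ii]
      have e : R (i, a) + 1 - (R (i, a) + 1) = R (i, a) - R (i, a) := by ring
      rw [e]; exact hRr
    · have e_t_i : (if r.tgt = (i, a) then (1 : ℂ) else 0) = 0 := if_neg h2
      rw [h1] at hRr ⊢
      rw [e_ii, e_t_i]
      have e : R (i, a) + 1 - (R r.tgt + 0) = (R (i, a) - R r.tgt) + 1 := by ring
      rw [e]; exact mem_S_add_one hRr
    · have e_s_i : (if r.src = (i, a) then (1 : ℂ) else 0) = 0 := if_neg h1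
      by_cases h3 : r.src = (j, b)
      · rw [hTp, hTp, h3, h2, e_jj, e_ji, e_ij, e_ii] at hTr
        rw [h3, h2, e_ji, e_ii]
        have e : R (j, b) + 0 - (R (i, a) + 1)
            = (R (j, b) + 0 - 1 - (R (i, a) + 1 - 0)) + 1 := by ring
        rw [e]; exact mem_S_add_one hTr
      · have e_s_j : (if r.src = (j, b) then (1 : ℂ) else 0) = 0 := if_neg h3
        rw [hTp, hTp, h2, e_s_i, e_s_j, e_ii, e_ij] at hTr
        rw [h2, e_s_i, e_ii]
        have e : R r.src + 0 - (R (i, a) + 1)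
            = R r.src + 0 - 0 - (R (i, a) + 1 - 0) := by ring
        rw [e]; exact hTr
    · have e_s_i : (if r.src = (i, a) then (1 : ℂ) else 0) = 0 := if_neg h1
      have e_t_i : (if r.tgt = (i, a) then (1 : ℂ) else 0) = 0 := if_neg h2
      rw [e_s_i, e_t_i]
      have e : R r.src + 0 - (R r.tgt + 0) = R r.src - R r.tgt := by ring
      rw [e]; exact hRr

end GTAux

namespace GTAux

lemma ecoeff_sub_deltaT {q t : ℂ} {i j : ℕ} (a b : ℕ) (h1 : j ≠ i) (h2 : j ≠ i + 1)
    (R : ℕ × ℕ → ℂ) : ecoeff q t i a (R - deltaT j b) = ecoeff q t i a R := by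
  have e1 : ∀ c, (R - deltaT j b) (i, c) = R (i, c) := by
    intro c
    have hne : ((i, c) : ℕ × ℕ) ≠ (j, b) := fun h => h1 (congrArg Prod.fst h).symm
    simp [Pi.sub_apply, deltaT, hne]
  have e2 : ∀ c, (R - deltaT j b) (i + 1, c) = R (i + 1, c) := by
    intro c
    have hne : ((i + 1, c) : ℕ × ℕ) ≠ (j, b) := fun h => h2 (congrArg Prod.fst h).symm
    simp [Pi.sub_apply, deltaT, hne]
  unfold ecoeff
  simp only [e1, e2]

lemma fcoeff_add_deltaT {q t : ℂ} {i j : ℕ} (a b : ℕ) (h1 : i ≠ j) (h2 : i ≠ j - 1)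
    (R : ℕ × ℕ → ℂ) : fcoeff q t j b (R + deltaT i a) = fcoeff q t j b R := by
  have e1 : ∀ c, (R + deltaT i a) (j, c) = R (j, c) := by
    intro c
    have hne : ((j, c) : ℕ × ℕ) ≠ (i, a) := fun h => h1 (congrArg Prod.fst h).symm
    simp [Pi.add_apply, deltaT, hne]
  have e2 : ∀ c, (R + deltaT i a) (j - 1, c) = R (j - 1, c) := by
    intro c
    have hne : ((j - 1, c) : ℕ × ℕ) ≠ (i, a) := fun h => h2 (congrArg Prod.fst h).symm
    simp [Pi.add_apply, deltaT, hne]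
  unfold fcoeff
  simp only [e1, e2]

lemma coeff_identity (q t : ℂ) (i a b : ℕ) (ha : a ∈ Finset.Icc 1 i)
    (hb : b ∈ Finset.Icc 1 (i + 1)) (R : ℕ × ℕ → ℂ) :
    fcoeff q t (i + 1) b R * ecoeff q t i a (R - deltaT (i + 1) b)
      = ecoeff q t i a R * fcoeff q t (i + 1) b (R + deltaT i a) := by
  have hii1 : (i : ℕ) ≠ i + 1 := by omega
  have hsub_i : ∀ c, (R - deltaT (i + 1) b) (i, c) = R (i, c) := by
    intro c
    have hne : ((i, c) : ℕ × ℕ) ≠ (i + 1, b) := fun h => hii1 (congrArg Prod.fst h)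
    simp [Pi.sub_apply, deltaT, hne]
  have hsub_i1 : ∀ c, (R - deltaT (i + 1) b) (i + 1, c)
      = R (i + 1, c) - (if c = b then 1 else 0) := by
    intro c
    simp [Pi.sub_apply, deltaT, Prod.mk.injEq]
  have hadd_i : ∀ c, (R + deltaT i a) (i, c) = R (i, c) + (if c = a then 1 else 0) := by
    intro c
    simp [Pi.add_apply, deltaT, Prod.mk.injEq]
  have hadd_i1 : ∀ c, (R + deltaT i a) (i + 1, c) = R (i + 1, c) := by
    intro c
    have hne : ((i + 1, c) : ℕ × ℕ) ≠ (i, a) := fun h => hii1 (congrArg Prod.fst h).symm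
    simp [Pi.add_apply, deltaT, hne]
  have h1 : fcoeff q t (i + 1) b R
      = (-qnum q t (R (i, a) - R (i + 1, b))
          * ∏ c ∈ (Finset.Icc 1 i).erase a, qnum q t (R (i + 1, b) - R (i, c)))
        / ∏ c ∈ (Finset.Icc 1 (i + 1)).erase b, qnum q t (R (i + 1, b) - R (i + 1, c)) := by
    unfold fcoeff
    rw [Nat.add_sub_cancel, ← Finset.mul_prod_erase _ _ ha,
      show R (i + 1, b) - R (i, a) = -(R (i, a) - R (i + 1, b)) by ring, qnum_neg]
  have h2 : ecoeff q t i a R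
      = (-(qnum q t (R (i, a) - R (i + 1, b))
          * ∏ c ∈ (Finset.Icc 1 (i + 1)).erase b, qnum q t (R (i, a) - R (i + 1, c))))
        / ∏ c ∈ (Finset.Icc 1 i).erase a, qnum q t (R (i, a) - R (i, c)) := by
    unfold ecoeff
    rw [← Finset.mul_prod_erase _ _ hb]
  have h3 : ecoeff q t i a (R - deltaT (i + 1) b)
      = (-(qnum q t (R (i, a) - R (i + 1, b) + 1)
          * ∏ c ∈ (Finset.Icc 1 (i + 1)).erase b, qnum q t (R (i, a) - R (i + 1, c))))
        / ∏ c ∈ (Finset.Icc 1 i).erase a, qnum q t (R (i, a) - R (i, c)) := by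
    unfold ecoeff
    simp only [hsub_i, hsub_i1]
    rw [← Finset.mul_prod_erase _ _ hb]
    have e1 : R (i, a) - (R (i + 1, b) - (if b = b then (1 : ℂ) else 0))
        = R (i, a) - R (i + 1, b) + 1 := by rw [if_pos rfl]; ring
    have e2 : ∏ c ∈ (Finset.Icc 1 (i + 1)).erase b,
          qnum q t (R (i, a) - (R (i + 1, c) - if c = b then 1 else 0))
        = ∏ c ∈ (Finset.Icc 1 (i + 1)).erase b, qnum q t (R (i, a) - R (i + 1, c)) :=
      Finset.prod_congr rfl fun c hc => by
        rw [if_neg (Finset.ne_of_mem_erase hc), sub_zero]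
    rw [e1, e2]
  have h4 : fcoeff q t (i + 1) b (R + deltaT i a)
      = (-qnum q t (R (i, a) - R (i + 1, b) + 1)
          * ∏ c ∈ (Finset.Icc 1 i).erase a, qnum q t (R (i + 1, b) - R (i, c)))
        / ∏ c ∈ (Finset.Icc 1 (i + 1)).erase b, qnum q t (R (i + 1, b) - R (i + 1, c)) := by
    unfold fcoeff
    rw [Nat.add_sub_cancel]
    simp only [hadd_i, hadd_i1]
    rw [← Finset.mul_prod_erase _ _ ha]
    have e1 : R (i + 1, b) - (R (i, a) + (if a = a then (1 : ℂ) else 0))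
        = -(R (i, a) - R (i + 1, b) + 1) := by rw [if_pos rfl]; ring
    have e2 : ∏ c ∈ (Finset.Icc 1 i).erase a,
          qnum q t (R (i + 1, b) - (R (i, c) + if c = a then 1 else 0))
        = ∏ c ∈ (Finset.Icc 1 i).erase a, qnum q t (R (i + 1, b) - R (i, c)) :=
      Finset.prod_congr rfl fun c hc => by
        rw [if_neg (Finset.ne_of_mem_erase hc), add_zero]
    rw [e1, e2, qnum_neg]
  rw [h1, h2, h3, h4, div_mul_div_comm, div_mul_div_comm,
    mul_comm (∏ c ∈ (Finset.Icc 1 i).erase a, qnum q t (R (i, a) - R (i, c)))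
      (∏ c ∈ (Finset.Icc 1 (i + 1)).erase b, qnum q t (R (i + 1, b) - R (i + 1, c)))]
  congr 1
  ring

end GTAux

namespace GTAux

lemma term_eq {n : ℕ} {q t : ℂ} {C : Set GTRel} {L : ℕ × ℕ → ℂ}
    (hL : SatisfiesSet n t C L) {i j a b : ℕ} (hij : i ≠ j) (hi : i ≤ n - 1)
    (hj : j ≤ n - 1) (hj1 : 1 ≤ j) (ha : a ∈ Finset.Icc 1 i) (hb : b ∈ Finset.Icc 1 j)
    (R : ℕ × ℕ → ℂ) (hR : R ∈ BSet n t C L) :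
    (if R - deltaT j b ∈ BSet n t C L then
        fcoeff q t j b R * ecoeff q t i a (R - deltaT j b) else 0)
      • tabVec (BSet n t C L) (R - deltaT j b + deltaT i a)
    = (if R + deltaT i a ∈ BSet n t C L then
        ecoeff q t i a R * fcoeff q t j b (R + deltaT i a) else 0)
      • tabVec (BSet n t C L) (R + deltaT i a - deltaT j b) := by
  have hfun : R - deltaT j b + deltaT i a = R + deltaT i a - deltaT j b := by
    funext p; simp only [Pi.sub_apply, Pi.add_apply]; ring
  rw [hfun]
  obtain ⟨ha1, hai⟩ := Finset.mem_Icc.mp ha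
  obtain ⟨hb1, hbj⟩ := Finset.mem_Icc.mp hb
  by_cases hT : R + deltaT i a - deltaT j b ∈ BSet n t C L
  · rw [if_pos (inter_mem_sub hL hij hj hb1 hbj hR hT),
      if_pos (inter_mem_add hL hij hi ha1 hai hR hT)]
    congr 1
    by_cases hcase : j = i + 1
    · subst hcase
      exact coeff_identity q t i a b ha hb R
    · rw [ecoeff_sub_deltaT a b (Ne.symm hij) hcase,
        fcoeff_add_deltaT a b hij (by omega : i ≠ j - 1)]
      ring
  · have : tabVec (BSet n t C L) (R + deltaT i a - deltaT j b) = 0 := by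
      unfold tabVec; rw [dif_neg hT]
    rw [this, smul_zero, smul_zero]

end GTAux

namespace GTAux

lemma eOp_single {q t : ℂ} {B : Set (ℕ × ℕ → ℂ)} (k : ℕ) (R : ↥B) :
    eOp q t B k (Finsupp.single R 1)
      = ∑ a ∈ Finset.Icc 1 k, ecoeff q t k a R.1 • tabVec B (R.1 + deltaT k a) := by
  unfold eOp; rw [extendLin_single]

lemma fOp_single {q t : ℂ} {B : Set (ℕ × ℕ → ℂ)} (k : ℕ) (R : ↥B) :
    fOp q t B k (Finsupp.single R 1)
      = ∑ a ∈ Finset.Icc 1 k, fcoeff q t k a R.1 • tabVec B (R.1 - deltaT k a) := by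
  unfold fOp; rw [extendLin_single]

lemma eOp_tabVec {q t : ℂ} {B : Set (ℕ × ℕ → ℂ)} (k : ℕ) (x : ℕ × ℕ → ℂ) :
    eOp q t B k (tabVec B x)
      = if x ∈ B then
          ∑ a ∈ Finset.Icc 1 k, ecoeff q t k a x • tabVec B (x + deltaT k a) else 0 := by
  unfold eOp; rw [extendLin_tabVec]; split <;> rfl

lemma fOp_tabVec {q t : ℂ} {B : Set (ℕ × ℕ → ℂ)} (k : ℕ) (x : ℕ × ℕ → ℂ) :
    fOp q t B k (tabVec B x)
      = if x ∈ B then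
          ∑ a ∈ Finset.Icc 1 k, fcoeff q t k a x • tabVec B (x - deltaT k a) else 0 := by
  unfold fOp; rw [extendLin_tabVec]; split <;> rfl

end GTAux



open GT in
/-- `e_i f_j = f_j e_i` for `i ≠ j`. -/
theorem ef_commute_of_ne
    (n : ℕ) (hn : 2 ≤ n) (q t : ℂ) (hq : Complex.exp t = q)
    (hroot : ∀ m : ℕ, 0 < m → q ^ m ≠ 1)
    (C : Set GTRel) (hC : C ⊆ RelSet n)
    (hdec : ∃ P : Set (Set GTRel), ⋃₀ P = C ∧ P.Pairwise Disconnected ∧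
      ∀ D ∈ P, AdmissibleIndec n D)
    (L : ℕ × ℕ → ℂ) (hL : SatisfiesSet n t C L)
    (i j : ℕ) (hi1 : 1 ≤ i) (hi : i ≤ n - 1) (hj1 : 1 ≤ j) (hj : j ≤ n - 1)
    (hij : i ≠ j) :
    eOp q t (BSet n t C L) i ∘ₗ fOp q t (BSet n t C L) j =
      fOp q t (BSet n t C L) j ∘ₗ eOp q t (BSet n t C L) i := by
  set B := BSet n t C L with hB
  apply Finsupp.lhom_ext'
  intro R
  apply LinearMap.ext_ring
  simp only [LinearMap.comp_apply, Finsupp.lsingle_apply]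
  rw [GTAux.fOp_single, GTAux.eOp_single, map_sum, map_sum]
  simp only [map_smul, GTAux.eOp_tabVec, GTAux.fOp_tabVec]
  have hL1 : ∀ b' ∈ Finset.Icc 1 j,
      fcoeff q t j b' R.1 • (if (R.1 - deltaT j b') ∈ B then
          ∑ a' ∈ Finset.Icc 1 i, ecoeff q t i a' (R.1 - deltaT j b')
            • tabVec B (R.1 - deltaT j b' + deltaT i a') else 0)
      = ∑ a' ∈ Finset.Icc 1 i, (if (R.1 - deltaT j b') ∈ B then
          fcoeff q t j b' R.1 * ecoeff q t i a' (R.1 - deltaT j b') else 0)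
            • tabVec B (R.1 - deltaT j b' + deltaT i a') := by
    intro b' _
    by_cases h : (R.1 - deltaT j b') ∈ B
    · rw [if_pos h, Finset.smul_sum]
      exact Finset.sum_congr rfl fun a' _ => by rw [if_pos h, smul_smul]
    · rw [if_neg h, smul_zero]
      exact ((Finset.sum_congr rfl fun a' _ => by
        rw [if_neg h, zero_smul]).trans Finset.sum_const_zero).symm
  have hR1 : ∀ a' ∈ Finset.Icc 1 i,
      ecoeff q t i a' R.1 • (if (R.1 + deltaT i a') ∈ B then
          ∑ b' ∈ Finset.Icc 1 j, fcoeff q t j b' (R.1 + deltaT i a')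
            • tabVec B (R.1 + deltaT i a' - deltaT j b') else 0)
      = ∑ b' ∈ Finset.Icc 1 j, (if (R.1 + deltaT i a') ∈ B then
          ecoeff q t i a' R.1 * fcoeff q t j b' (R.1 + deltaT i a') else 0)
            • tabVec B (R.1 + deltaT i a' - deltaT j b') := by
    intro a' _
    by_cases h : (R.1 + deltaT i a') ∈ B
    · rw [if_pos h, Finset.smul_sum]
      exact Finset.sum_congr rfl fun b' _ => by rw [if_pos h, smul_smul]
    · rw [if_neg h, smul_zero]
      exact ((Finset.sum_congr rfl fun b' _ => by
        rw [if_neg h, zero_smul]).trans Finset.sum_const_zero).symm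
  rw [Finset.sum_congr rfl hL1, Finset.sum_congr rfl hR1, Finset.sum_comm]
  refine Finset.sum_congr rfl fun a' ha' => Finset.sum_congr rfl fun b' hb' => ?_
  exact GTAux.term_eq hL hij hi hj hj1 ha' hb' R.1 R.2
end
end

section
/- Let 𝒞 be an admissible set of relations (a union of pairwise disconnected indecomposable admissible sets) and T(L) a 𝒞-realization. Then for all 1 ≤ i, j ≤ n−1 with |i−j| > 1 the Gelfand–Tsetlin operators on V_𝒞(T(L)) satisfy e_i e_j = e_j e_i and f_i f_j = f_j f_i. -/
/- Common setup: relations between boxes of Gelfand–Tsetlin tableaux,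
admissible sets of relations, tableaux satisfying relations, and the
Gelfand–Tsetlin operators on the space with basis `ℬ_𝒞(T(L))`. -/

noncomputable section

namespace GT

/-! ### Auxiliary lemmas -/

lemma tabVec_of_not_mem {B : Set (ℕ × ℕ → ℂ)} {x : ℕ × ℕ → ℂ} (h : x ∉ B) :
    tabVec B x = 0 := dif_neg h

lemma extendLin_single {B : Set (ℕ × ℕ → ℂ)} (g : ↥B → (↥B →₀ ℂ)) (R : ↥B) (b : ℂ) :
    extendLin g (Finsupp.single R b) = b • g R := by
  unfold extendLin
  rw [Finsupp.lsum_single]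
  simp

lemma eOp_single (q t : ℂ) (B : Set (ℕ × ℕ → ℂ)) (k : ℕ) (R : ↥B) (b : ℂ) :
    eOp q t B k (Finsupp.single R b) =
      b • ∑ m ∈ Finset.Icc 1 k, ecoeff q t k m R.1 • tabVec B (R.1 + deltaT k m) :=
  extendLin_single _ _ _

lemma fOp_single (q t : ℂ) (B : Set (ℕ × ℕ → ℂ)) (k : ℕ) (R : ↥B) (b : ℂ) :
    fOp q t B k (Finsupp.single R b) =
      b • ∑ m ∈ Finset.Icc 1 k, fcoeff q t k m R.1 • tabVec B (R.1 - deltaT k m) :=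
  extendLin_single _ _ _

open scoped Classical in
lemma eOp_tabVec (q t : ℂ) (B : Set (ℕ × ℕ → ℂ)) (k : ℕ) (x : ℕ × ℕ → ℂ) :
    eOp q t B k (tabVec B x) =
      if h : x ∈ B then
        ∑ m ∈ Finset.Icc 1 k, ecoeff q t k m x • tabVec B (x + deltaT k m)
      else 0 := by
  by_cases h : x ∈ B
  · rw [tabVec, dif_pos h, dif_pos h, eOp_single, one_smul]
  · rw [tabVec, dif_neg h, dif_neg h, map_zero]

open scoped Classical in
lemma fOp_tabVec (q t : ℂ) (B : Set (ℕ × ℕ → ℂ)) (k : ℕ) (x : ℕ × ℕ → ℂ) :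
    fOp q t B k (tabVec B x) =
      if h : x ∈ B then
        ∑ m ∈ Finset.Icc 1 k, fcoeff q t k m x • tabVec B (x - deltaT k m)
      else 0 := by
  by_cases h : x ∈ B
  · rw [tabVec, dif_pos h, dif_pos h, fOp_single, one_smul]
  · rw [tabVec, dif_neg h, dif_neg h, map_zero]

lemma deltaT_row_ne {i x : ℕ} (m y : ℕ) (h : x ≠ i) : deltaT i m (x, y) = 0 := by
  simp [deltaT, Prod.ext_iff, h]

lemma intHalf_add_int (t : ℂ) {x : ℂ} (w : ℤ) (hx : x ∈ intHalf t) :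
    x + w ∈ intHalf t := by
  obtain ⟨m, y, hy, rfl⟩ := hx
  exact ⟨m + w, y, hy, by push_cast; ring⟩

lemma ecoeff_congr (q t : ℂ) (k m : ℕ) {R R' : ℕ × ℕ → ℂ}
    (h : ∀ x, R' (k, x) = R (k, x)) (h' : ∀ x, R' (k + 1, x) = R (k + 1, x)) :
    ecoeff q t k m R' = ecoeff q t k m R := by
  unfold ecoeff
  simp only [h, h']

lemma fcoeff_congr (q t : ℂ) (k m : ℕ) {R R' : ℕ × ℕ → ℂ}
    (h : ∀ x, R' (k, x) = R (k, x)) (h' : ∀ x, R' (k - 1, x) = R (k - 1, x)) :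
    fcoeff q t k m R' = fcoeff q t k m R := by
  unfold fcoeff
  simp only [h, h']

/-- A relation in `ℛ` cannot involve both row `i` and row `j` when the rows are
far apart and both `≤ n-1`. -/
lemma rel_not_both (n i j s m : ℕ) (hn : 2 ≤ n) (hi : i ≤ n - 1) (hj : j ≤ n - 1)
    (hij : i + 1 < j ∨ j + 1 < i) {r : GTRel} (hr : r ∈ RelSet n) :
    (deltaT i m r.src = 0 ∧ deltaT i m r.tgt = 0) ∨
    (deltaT j s r.src = 0 ∧ deltaT j s r.tgt = 0) := by
  rcases hr with ⟨a, b, b', hb1, hb2, hb3, hb4, hb5, rfl⟩ |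
    ⟨a, b, b', hb1, hb2, hb3, hb4, hb5, rfl⟩ | ⟨a, b, hb1, hb2, hb3, hb4, hb5, rfl⟩
  · have ha2 : 2 ≤ a := by omega
    by_cases hcase : i = a ∨ i = a - 1
    · right
      exact ⟨deltaT_row_ne _ _ (by omega), deltaT_row_ne _ _ (by omega)⟩
    · left
      exact ⟨deltaT_row_ne _ _ (by omega), deltaT_row_ne _ _ (by omega)⟩
  · have ha2 : 2 ≤ a := by omega
    by_cases hcase : i = a ∨ i = a - 1
    · right
      exact ⟨deltaT_row_ne _ _ (by omega), deltaT_row_ne _ _ (by omega)⟩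
    · left
      exact ⟨deltaT_row_ne _ _ (by omega), deltaT_row_ne _ _ (by omega)⟩
  · left
    exact ⟨deltaT_row_ne _ _ (by omega), deltaT_row_ne _ _ (by omega)⟩

/-- Key membership lemma: if `R` and `R + c·δ^{js} + d·δ^{im}` both belong to the
basis, then so does the intermediate tableau `R + c·δ^{js}`. -/
lemma keyMem (n : ℕ) (hn : 2 ≤ n) (t : ℂ) (C : Set GTRel) (hC : C ⊆ RelSet n)
    (L R : ℕ × ℕ → ℂ) (i j s m : ℕ)
    (hi : i ≤ n - 1) (hj : j ≤ n - 1) (hs1 : 1 ≤ s) (hs2 : s ≤ j)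
    (hij : i + 1 < j ∨ j + 1 < i) (c d : ℤ)
    (hR : R ∈ BSet n t C L)
    (hR' : (fun p => R p + (c : ℂ) * deltaT j s p + (d : ℂ) * deltaT i m p) ∈ BSet n t C L) :
    (fun p => R p + (c : ℂ) * deltaT j s p) ∈ BSet n t C L := by
  obtain ⟨⟨z, hz, hzeq⟩, hsat, hcomp⟩ := hR
  refine ⟨⟨fun p => z p + if p = (j, s) then c else 0, ?_, ?_⟩, ?_, ?_⟩
  · intro p hp
    by_cases hps : p = (j, s)
    · subst hps; exact ⟨hs1, hs2, hj⟩
    · apply hz; simpa [hps] using hp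
  · funext p
    have hh : R p = L p + (z p : ℂ) := congrFun hzeq p
    simp only [addShift, deltaT, hh]
    push_cast
    split_ifs <;> ring
  · intro r hr
    rcases rel_not_both n i j s m hn hi hj hij (hC hr) with ⟨h1, h2⟩ | ⟨h1, h2⟩
    · have h := hR'.2.1 r hr
      unfold SatisfiesRel at h ⊢
      simpa [h1, h2] using h
    · have h := hsat r hr
      unfold SatisfiesRel at h ⊢
      simpa [h1, h2] using h
  · intro k a b ha1 ha2 hb1 hb2 hk hab hdiff
    set w : ℤ := c * ((if ((k, a) : ℕ × ℕ) = (j, s) then 1 else 0) -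
      (if ((k, b) : ℕ × ℕ) = (j, s) then 1 else 0)) with hw
    have heq : (fun p => R p + (c : ℂ) * deltaT j s p) (k, a) -
        (fun p => R p + (c : ℂ) * deltaT j s p) (k, b) =
        (R (k, a) - R (k, b)) + (w : ℂ) := by
      simp only [deltaT, hw]
      push_cast
      split_ifs <;> ring
    have hmem : R (k, a) - R (k, b) ∈ intHalf t := by
      have h2 := intHalf_add_int t (-w) hdiff
      rw [heq] at h2
      convert h2 using 1
      push_cast
      ring
    exact hcomp k a b ha1 ha2 hb1 hb2 hk hab hmem

end GT

set_option maxHeartbeats 1000000 in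
open GT in
/-- `e_i e_j = e_j e_i` and `f_i f_j = f_j f_i` for `|i - j| > 1`. -/
theorem ee_ff_commute_of_far
    (n : ℕ) (hn : 2 ≤ n) (q t : ℂ) (hq : Complex.exp t = q)
    (hroot : ∀ m : ℕ, 0 < m → q ^ m ≠ 1)
    (C : Set GTRel) (hC : C ⊆ RelSet n)
    (hdec : ∃ P : Set (Set GTRel), ⋃₀ P = C ∧ P.Pairwise Disconnected ∧
      ∀ D ∈ P, AdmissibleIndec n D)
    (L : ℕ × ℕ → ℂ) (hL : SatisfiesSet n t C L)
    (i j : ℕ) (hi1 : 1 ≤ i) (hi : i ≤ n - 1) (hj1 : 1 ≤ j) (hj : j ≤ n - 1)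
    (hij : 1 < |(i : ℤ) - (j : ℤ)|) :
    eOp q t (BSet n t C L) i ∘ₗ eOp q t (BSet n t C L) j =
        eOp q t (BSet n t C L) j ∘ₗ eOp q t (BSet n t C L) i ∧
    fOp q t (BSet n t C L) i ∘ₗ fOp q t (BSet n t C L) j =
        fOp q t (BSet n t C L) j ∘ₗ fOp q t (BSet n t C L) i := by
  have hijn : i + 1 < j ∨ j + 1 < i := by
    rcases abs_cases ((i : ℤ) - (j : ℤ)) with ⟨h, _⟩ | ⟨h, _⟩ <;> omega
  constructor
  · -- the `e` part
    apply Finsupp.lhom_ext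
    intro R b
    have key : ∀ k l : ℕ, k ≤ n - 1 → l ≤ n - 1 → (k + 1 < l ∨ l + 1 < k) →
        ∀ s ∈ Finset.Icc 1 l,
        eOp q t (BSet n t C L) k
            (ecoeff q t l s R.1 • tabVec (BSet n t C L) (R.1 + deltaT l s)) =
          ∑ m ∈ Finset.Icc 1 k, (ecoeff q t l s R.1 * ecoeff q t k m R.1) •
            tabVec (BSet n t C L) (R.1 + deltaT l s + deltaT k m) := by
      intro k l hk hl hkl s hs
      rw [Finset.mem_Icc] at hs
      rw [map_smul, eOp_tabVec]
      by_cases hmem : R.1 + deltaT l s ∈ BSet n t C L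
      · rw [dif_pos hmem, Finset.smul_sum]
        refine Finset.sum_congr rfl fun m hm => ?_
        rw [smul_smul]
        congr 2
        exact ecoeff_congr q t k m
          (fun x => by simp [deltaT_row_ne s x (show (k : ℕ) ≠ l by omega)])
          (fun x => by simp [deltaT_row_ne s x (show (k + 1 : ℕ) ≠ l by omega)])
      · rw [dif_neg hmem, smul_zero]
        symm
        refine Finset.sum_eq_zero fun m hm => ?_
        rw [tabVec_of_not_mem, smul_zero]
        intro hfin
        apply hmem
        have hfun2 : R.1 + deltaT l s + deltaT k m =
            (fun p => R.1 p + ((1 : ℤ) : ℂ) * deltaT l s p + ((1 : ℤ) : ℂ) * deltaT k m p) := by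
          funext p
          show R.1 p + deltaT l s p + deltaT k m p = _
          push_cast
          ring
        have h1 := keyMem n hn t C hC L R.1 k l s m hk hl hs.1 hs.2 hkl 1 1 R.2
          (hfun2 ▸ hfin)
        have hfun1 : R.1 + deltaT l s = (fun p => R.1 p + ((1 : ℤ) : ℂ) * deltaT l s p) := by
          funext p
          show R.1 p + deltaT l s p = _
          push_cast
          ring
        rw [hfun1]
        exact h1
    simp only [LinearMap.comp_apply]
    rw [eOp_single, eOp_single, map_smul, map_smul]
    refine congrArg _ ?_
    rw [map_sum, map_sum,
      Finset.sum_congr rfl (key i j hi hj hijn),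
      Finset.sum_congr rfl (key j i hj hi hijn.symm),
      Finset.sum_comm]
    refine Finset.sum_congr rfl fun m hm => Finset.sum_congr rfl fun s hs => ?_
    rw [mul_comm, add_right_comm]
  · -- the `f` part
    apply Finsupp.lhom_ext
    intro R b
    have key : ∀ k l : ℕ, k ≤ n - 1 → l ≤ n - 1 → (k + 1 < l ∨ l + 1 < k) →
        ∀ s ∈ Finset.Icc 1 l,
        fOp q t (BSet n t C L) k
            (fcoeff q t l s R.1 • tabVec (BSet n t C L) (R.1 - deltaT l s)) =
          ∑ m ∈ Finset.Icc 1 k, (fcoeff q t l s R.1 * fcoeff q t k m R.1) •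
            tabVec (BSet n t C L) (R.1 - deltaT l s - deltaT k m) := by
      intro k l hk hl hkl s hs
      rw [Finset.mem_Icc] at hs
      rw [map_smul, fOp_tabVec]
      by_cases hmem : R.1 - deltaT l s ∈ BSet n t C L
      · rw [dif_pos hmem, Finset.smul_sum]
        refine Finset.sum_congr rfl fun m hm => ?_
        rw [smul_smul]
        congr 2
        exact fcoeff_congr q t k m
          (fun x => by simp [deltaT_row_ne s x (show (k : ℕ) ≠ l by omega)])
          (fun x => by simp [deltaT_row_ne s x (show (k - 1 : ℕ) ≠ l by omega)])
      · rw [dif_neg hmem, smul_zero]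
        symm
        refine Finset.sum_eq_zero fun m hm => ?_
        rw [tabVec_of_not_mem, smul_zero]
        intro hfin
        apply hmem
        have hfun2 : R.1 - deltaT l s - deltaT k m =
            (fun p => R.1 p + ((-1 : ℤ) : ℂ) * deltaT l s p + ((-1 : ℤ) : ℂ) * deltaT k m p) := by
          funext p
          show R.1 p - deltaT l s p - deltaT k m p = _
          push_cast
          ring
        have h1 := keyMem n hn t C hC L R.1 k l s m hk hl hs.1 hs.2 hkl (-1) (-1) R.2
          (hfun2 ▸ hfin)
        have hfun1 : R.1 - deltaT l s = (fun p => R.1 p + ((-1 : ℤ) : ℂ) * deltaT l s p) := by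
          funext p
          show R.1 p - deltaT l s p = _
          push_cast
          ring
        rw [hfun1]
        exact h1
    simp only [LinearMap.comp_apply]
    rw [fOp_single, fOp_single, map_smul, map_smul]
    refine congrArg _ ?_
    rw [map_sum, map_sum,
      Finset.sum_congr rfl (key i j hi hj hijn),
      Finset.sum_congr rfl (key j i hj hi hijn.symm),
      Finset.sum_comm]
    refine Finset.sum_congr rfl fun m hm => Finset.sum_congr rfl fun s hs => ?_
    rw [mul_comm, sub_right_comm]
end
end

section
/- Let 𝒞 be an admissible set of relations, T(L) a 𝒞-realization, and z₁ ≠ z₂ ∈ ℤ^{n(n−1)/2} integer shift vectors such that both T(L+z₁) and T(L+z₂) satisfy 𝒞. Then there exist 1 ≤ k ≤ m ≤ n such that γ_{mk}(L+z₁) ≠ γ_{mk}(L+z₂). (Equivalently: distinct tableaux in ℬ_𝒞(T(L)) have distinct Gelfand–Tsetlin characters, i.e. each Gelfand–Tsetlin character occurs in V_𝒞(T(L)) with multiplicity one.) -/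
/- Common setup: relations between boxes of Gelfand–Tsetlin tableaux,
admissible sets of relations, tableaux satisfying relations, and the
Gelfand–Tsetlin operators on the space with basis `ℬ_𝒞(T(L))`. -/

noncomputable section

namespace GT

/-- The `q`-number `(i)_Q = (Q^i - 1)/(Q - 1)`. -/
def qnat (Q : ℂ) (i : ℕ) : ℂ := (Q ^ i - 1) / (Q - 1)

/-- The `q`-factorial `(k)_Q! = Π_{i=1}^k (i)_Q`. -/
def qfact (Q : ℂ) (k : ℕ) : ℂ := ∏ i ∈ Finset.Icc 1 k, qnat Q i

/-- The eigenvalue `γ_{mk}(L)` of the generator `c_{mk}` of the Gelfand–Tsetlin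
subalgebra on `T(L)`; the sum over permutations `τ ∈ S_m` with
`τ(1) < ⋯ < τ(k)`, `τ(k+1) < ⋯ < τ(m)` is written as a sum over `k`-element
subsets `S` of `{1, …, m}` (the images of `{1, …, k}` under such `τ`). -/
def gammaMK (q t : ℂ) (m k : ℕ) (L : ℕ × ℕ → ℂ) : ℂ :=
  qfact (q ^ 2)⁻¹ k * qfact (q ^ 2)⁻¹ (m - k) *
    qpow t ((k : ℂ) * ((k : ℂ) + 1) + (m : ℂ) * ((m : ℂ) - 3) / 2) *
    ∑ S ∈ (Finset.Icc 1 m).powersetCard k,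
      qpow t ((∑ i ∈ S, L (m, i)) - ∑ i ∈ Finset.Icc 1 m \ S, L (m, i))

end GT
section Aux

namespace GT

variable {q t : ℂ}

lemma qpow_add (t x y : ℂ) : qpow t (x + y) = qpow t x * qpow t y := by
  simp [qpow, mul_add, Complex.exp_add]

lemma qpow_ne_zero (t x : ℂ) : qpow t x ≠ 0 := Complex.exp_ne_zero _

lemma qpow_neg' (t x : ℂ) : qpow t (-x) = (qpow t x)⁻¹ := by
  simp [qpow, Complex.exp_neg]

lemma qpow_zero' (t : ℂ) : qpow t 0 = 1 := by simp [qpow]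

lemma qpow_sub' (t x y : ℂ) : qpow t (x - y) = qpow t x / qpow t y := by
  rw [sub_eq_add_neg, qpow_add, qpow_neg', div_eq_mul_inv]

lemma qpow_sum {ι : Type*} (t : ℂ) (s : Finset ι) (f : ι → ℂ) :
    qpow t (∑ i ∈ s, f i) = ∏ i ∈ s, qpow t (f i) := by
  rw [qpow, Finset.mul_sum, Complex.exp_sum]; rfl

lemma qpow_intCast (hq : Complex.exp t = q) (d : ℤ) : qpow t (d : ℂ) = q ^ d := by
  rw [qpow, mul_comm, Complex.exp_int_mul, hq]

lemma zpow_ne_one' (hq : Complex.exp t = q) (hroot : ∀ m : ℕ, 0 < m → q ^ m ≠ 1)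
    {d : ℤ} (hd : d ≠ 0) : q ^ d ≠ 1 := by
  intro h
  rcases hd.lt_or_gt with hlt | hlt
  · have h' : q ^ (-d) = 1 := by rw [zpow_neg, h, inv_one]
    have hd' : 0 < (-d).toNat := by omega
    exact hroot _ hd' (by rwa [← zpow_natCast, Int.toNat_of_nonneg (by omega)] )
  · have hd' : 0 < d.toNat := by omega
    exact hroot _ hd' (by rwa [← zpow_natCast, Int.toNat_of_nonneg (by omega)] )

lemma qpow_int_inj (hq : Complex.exp t = q) (hroot : ∀ m : ℕ, 0 < m → q ^ m ≠ 1)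
    {c d : ℤ} (h : qpow t (c : ℂ) = qpow t (d : ℂ)) : c = d := by
  by_contra hne
  apply zpow_ne_one' hq hroot (sub_ne_zero.mpr hne) (d := c - d)
  rw [← qpow_intCast hq]
  push_cast
  rw [sub_eq_add_neg, qpow_add, qpow_neg', h, mul_inv_cancel₀ (qpow_ne_zero t _)]

lemma qpow_diff_int {B : ℂ} (hB : B ≠ 0) {u v : ℂ} {cu cv : ℤ}
    (hu : qpow t (2 * u) = B * qpow t (2 * (cu : ℂ)))
    (hv : qpow t (2 * v) = B * qpow t (2 * (cv : ℂ))) :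
    qpow t (2 * (u - v)) = qpow t ((2 * (cu - cv) : ℤ) : ℂ) := by
  have h1 : 2 * (u - v) = 2 * u - 2 * v := by ring
  rw [h1, qpow_sub', hu, hv, mul_div_mul_left _ _ hB, ← qpow_sub']
  congr 1
  push_cast
  ring

/-- Key order lemma: two functions with equal value multisets on a finset and
inducing the same strict order coincide on the finset. -/
lemma eq_on_of_map_eq_of_orderIso :
    ∀ (S : Finset ℕ) (a b : ℕ → ℤ), S.val.map a = S.val.map b →
    (∀ i ∈ S, ∀ j ∈ S, (a i < a j ↔ b i < b j)) → ∀ i ∈ S, a i = b i := by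
  intro S
  induction S using Finset.strongInduction with
  | _ S ih =>
    intro a b hmap hord i hi
    obtain ⟨x, hx, hxmax⟩ := S.exists_max_image a ⟨i, hi⟩
    have hbmax : ∀ j ∈ S, b j ≤ b x := by
      intro j hj
      by_contra hlt
      exact absurd (hxmax j hj) (not_le.mpr ((hord x hx j hj).mpr (not_le.mp hlt)))
    have haxbx : a x = b x := by
      have h1 : b x ∈ S.val.map a := by
        rw [hmap]; exact Multiset.mem_map_of_mem b hx
      have h2 : a x ∈ S.val.map b := by
        rw [← hmap]; exact Multiset.mem_map_of_mem a hx
      obtain ⟨j1, hj1, hj1e⟩ := Multiset.mem_map.mp h1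
      obtain ⟨j2, hj2, hj2e⟩ := Multiset.mem_map.mp h2
      have := hxmax j1 hj1
      have := hbmax j2 hj2
      omega
    by_cases hix : i = x
    · exact hix ▸ haxbx
    · have hi' : i ∈ S.erase x := Finset.mem_erase.mpr ⟨hix, hi⟩
      refine ih (S.erase x) (Finset.erase_ssubset hx) a b ?_ ?_ i hi'
      · have hv : S.val = x ::ₘ (S.erase x).val := by
          rw [Finset.erase_val]; exact (Multiset.cons_erase hx).symm
        rw [hv, Multiset.map_cons, Multiset.map_cons, haxbx] at hmap
        exact (Multiset.cons_inj_right _).mp hmap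
      · exact fun i' hi'' j hj =>
          hord i' (Finset.mem_of_mem_erase hi'') j (Finset.mem_of_mem_erase hj)

end GT

end Aux

namespace GT

variable {q t : ℂ}

/-- Two relations are adjacent if they share a vertex. -/
def adjRel (r r' : GTRel) : Prop :=
  ∃ v, (r.src = v ∨ r.tgt = v) ∧ (r'.src = v ∨ r'.tgt = v)

/-- The connected component of `C` containing the relation `r`. -/
def compOf (C : Set GTRel) (r : GTRel) : Set GTRel :=
  {r' | r' ∈ C ∧ Relation.ReflTransGen (fun a b => b ∈ C ∧ adjRel a b) r r'}

lemma self_mem_compOf {C : Set GTRel} {r : GTRel} (hr : r ∈ C) : r ∈ compOf C r :=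
  ⟨hr, Relation.ReflTransGen.refl⟩

lemma compOf_isComponent {C : Set GTRel} {r : GTRel} (hr : r ∈ C) :
    IsComponent C (compOf C r) := by
  refine ⟨fun r' h => h.1, ⟨⟨r, self_mem_compOf hr⟩, ?_⟩, ?_⟩
  · -- indecomposable
    intro C₁ C₂ h1 h2 hdisj heq
    have claim : ∀ (A B : Set GTRel), Disconnected A B → compOf C r = A ∪ B → r ∈ A →
        ∀ s, Relation.ReflTransGen (fun a b => b ∈ C ∧ adjRel a b) r s → s ∈ A := by
      intro A B hAB hABeq hrA s hs
      induction hs with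
      | refl => exact hrA
      | tail hpath hstep ih =>
        rename_i b c
        have hcmem : c ∈ compOf C r := ⟨hstep.1, hpath.tail hstep⟩
        have hcu : c ∈ A ∪ B := hABeq ▸ hcmem
        rcases hcu with hcA | hcB
        · exact hcA
        · exfalso
          obtain ⟨v, hv1, hv2⟩ := hstep.2
          have hvA : v ∈ vertexSet A := ⟨b, ih, hv1⟩
          have hvB : v ∈ vertexSet B := ⟨c, hcB, hv2⟩
          have : v ∈ vertexSet A ∩ vertexSet B := ⟨hvA, hvB⟩
          rw [hAB] at this
          exact this
    have hru : r ∈ C₁ ∪ C₂ := heq ▸ self_mem_compOf hr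
    rcases hru with hrc | hrc
    · obtain ⟨r₂, hr₂⟩ := h2
      have hr₂m : r₂ ∈ compOf C r := heq ▸ Set.mem_union_right _ hr₂
      have hr₂1 : r₂ ∈ C₁ := claim C₁ C₂ hdisj heq hrc r₂ hr₂m.2
      have : r₂.src ∈ vertexSet C₁ ∩ vertexSet C₂ :=
        ⟨⟨r₂, hr₂1, Or.inl rfl⟩, ⟨r₂, hr₂, Or.inl rfl⟩⟩
      rw [hdisj] at this
      exact this
    · obtain ⟨r₁, hr₁⟩ := h1
      have hdisj' : Disconnected C₂ C₁ := by
        unfold Disconnected at hdisj ⊢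
        rw [Set.inter_comm]; exact hdisj
      have heq' : compOf C r = C₂ ∪ C₁ := by rw [heq, Set.union_comm]
      have hr₁m : r₁ ∈ compOf C r := heq ▸ Set.mem_union_left _ hr₁
      have hr₁2 : r₁ ∈ C₂ := claim C₂ C₁ hdisj' heq' hrc r₁ hr₁m.2
      have : r₁.src ∈ vertexSet C₁ ∩ vertexSet C₂ :=
        ⟨⟨r₁, hr₁, Or.inl rfl⟩, ⟨r₁, hr₁2, Or.inl rfl⟩⟩
      rw [hdisj] at this
      exact this
  · -- disconnected from the rest
    unfold Disconnected
    ext v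
    simp only [Set.mem_inter_iff, Set.mem_empty_iff_false, iff_false, not_and]
    rintro ⟨r₁, hr₁, hv₁⟩ ⟨r₂, hr₂, hv₂⟩
    exact hr₂.2 ⟨hr₂.1, hr₁.2.tail ⟨hr₂.1, v, hv₁, hv₂⟩⟩

lemma exists_isComponent {C : Set GTRel} {x y : ℕ × ℕ} (h : SameComponent C x y)
    (hxy : x ≠ y) : ∃ D, IsComponent C D ∧ x ∈ vertexSet D ∧ y ∈ vertexSet D := by
  obtain ⟨hx, hy, hpath⟩ := h
  have claim : x = y ∨ ∃ r₀ ∈ C, (r₀.src = x ∨ r₀.tgt = x) ∧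
      ∃ r' ∈ compOf C r₀, (r'.src = y ∨ r'.tgt = y) := by
    clear hxy hx hy
    induction hpath with
    | refl => exact Or.inl rfl
    | tail hpath hstep ih =>
      rename_i b c
      obtain ⟨s, hsC, hsb, hsc⟩ := hstep
      rcases ih with rfl | ⟨r₀, hr₀C, hr₀x, r', hr'mem, hr'b⟩
      · exact Or.inr ⟨s, hsC, hsb, s, self_mem_compOf hsC, hsc⟩
      · exact Or.inr ⟨r₀, hr₀C, hr₀x,
          s, ⟨hsC, hr'mem.2.tail ⟨hsC, b, hr'b, hsb⟩⟩, hsc⟩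
  rcases claim with rfl | ⟨r₀, hr₀C, hr₀x, r', hr'mem, hr'y⟩
  · exact absurd rfl hxy
  · exact ⟨compOf C r₀, compOf_isComponent hr₀C,
      ⟨r₀, self_mem_compOf hr₀C, hr₀x⟩, ⟨r', hr'mem, hr'y⟩⟩

/-- If `C` contains the chain `(m,i) > (m+1,s) ≥ (m,j)` and `R` satisfies `C`, then the
integer coordinates of `R` at `(m,i)` and `(m,j)` are strictly ordered. -/
lemma opt1_lt (hq : Complex.exp t = q) (hroot : ∀ m : ℕ, 0 < m → q ^ m ≠ 1)
    {C : Set GTRel} {R : ℕ × ℕ → ℂ} (hR : ∀ r ∈ C, SatisfiesRel t R r)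
    {m i j s : ℕ}
    (h1 : (⟨(m, i), (m + 1, s), true⟩ : GTRel) ∈ C)
    (h2 : (⟨(m + 1, s), (m, j), false⟩ : GTRel) ∈ C)
    {B : ℂ} (hB : B ≠ 0) {ci cj : ℤ}
    (hXi : qpow t (2 * R (m, i)) = B * qpow t (2 * (ci : ℂ)))
    (hXj : qpow t (2 * R (m, j)) = B * qpow t (2 * (cj : ℂ))) : cj < ci := by
  have hr1 := hR _ h1
  have hr2 := hR _ h2
  simp only [SatisfiesRel, if_true, if_false] at hr1 hr2
  obtain ⟨p₁, hp₁, y₁, hy₁, e₁⟩ := hr1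
  obtain ⟨p₂, hp₂, y₂, hy₂, e₂⟩ := hr2
  have hD : R (m, i) - R (m, j) = ((p₁ + p₂ : ℤ) : ℂ) + (y₁ + y₂) / 2 := by
    push_cast
    linear_combination e₁ + e₂
  have key1 : qpow t (2 * (R (m, i) - R (m, j))) = qpow t ((2 * (p₁ + p₂) : ℤ) : ℂ) := by
    have harg : 2 * (R (m, i) - R (m, j)) = ((2 * (p₁ + p₂) : ℤ) : ℂ) + (y₁ + y₂) := by
      rw [hD]; push_cast; ring
    rw [harg, qpow_add, qpow_add, hy₁, hy₂, mul_one, mul_one]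
  have key2 : qpow t (2 * (R (m, i) - R (m, j))) = qpow t ((2 * (ci - cj) : ℤ) : ℂ) :=
    qpow_diff_int hB hXi hXj
  have := qpow_int_inj hq hroot (key1.symm.trans key2)
  omega

end GT

namespace GT

/-- distinct tableaux in `ℬ_𝒞(T(L))` are separated by the eigenvalues
`γ_{mk}`, i.e. each Gelfand–Tsetlin character occurs with multiplicity one. -/
theorem gamma_separates_tableaux
    (n : ℕ) (hn : 2 ≤ n) (q t : ℂ) (hq : Complex.exp t = q)
    (hroot : ∀ m : ℕ, 0 < m → q ^ m ≠ 1)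
    (C : Set GTRel) (hC : C ⊆ RelSet n) (hCadm : Admissible n C)
    (L : ℕ × ℕ → ℂ) (hL : SatisfiesSet n t C L)
    (z₁ z₂ : ℕ × ℕ → ℤ) (hz₁ : IsShift n z₁) (hz₂ : IsShift n z₂) (hne : z₁ ≠ z₂)
    (hs₁ : SatisfiesSet n t C (addShift L z₁))
    (hs₂ : SatisfiesSet n t C (addShift L z₂)) :
    ∃ m k : ℕ, 1 ≤ k ∧ k ≤ m ∧ m ≤ n ∧
      gammaMK q t m k (addShift L z₁) ≠ gammaMK q t m k (addShift L z₂) := by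
  classical
  by_contra hcon
  push_neg at hcon
  obtain ⟨p, hp⟩ : ∃ p : ℕ × ℕ, z₁ p ≠ z₂ p := Function.ne_iff.mp hne
  have hb : 1 ≤ p.2 ∧ p.2 ≤ p.1 ∧ p.1 ≤ n - 1 := by
    rcases eq_or_ne (z₁ p) 0 with h0 | h0
    · exact hz₂ p fun h => hp (h0.trans h.symm)
    · exact hz₁ p h0
  obtain ⟨m, i₀⟩ := p
  obtain ⟨hi₀1, hi₀m, hmn1⟩ := hb
  have hm1 : 1 ≤ m := le_trans hi₀1 hi₀m
  have hmn : m ≤ n := by omega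
  set R₁ := addShift L z₁ with hR₁def
  set R₂ := addShift L z₂ with hR₂def
  -- Step 1: the value multisets of row m agree
  have hqfact : ∀ k : ℕ, qfact (q ^ 2)⁻¹ k ≠ 0 := by
    intro k
    refine Finset.prod_ne_zero_iff.mpr fun i hi => ?_
    have hi1 : 1 ≤ i := (Finset.mem_Icc.mp hi).1
    unfold qnat
    have hnum : ((q ^ 2)⁻¹) ^ i - 1 ≠ 0 := by
      rw [sub_ne_zero]
      intro hcc
      apply hroot (2 * i) (by omega)
      rw [inv_pow, inv_eq_one] at hcc
      rwa [pow_mul]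
    have hden : (q ^ 2)⁻¹ - 1 ≠ 0 := by
      rw [sub_ne_zero]
      intro hcc
      exact hroot 2 (by omega) (inv_eq_one.mp hcc)
    exact div_ne_zero hnum hden
  have hsum : ∀ k : ℕ, 1 ≤ k → k ≤ m →
      (∑ S ∈ (Finset.Icc 1 m).powersetCard k,
        qpow t ((∑ i ∈ S, R₁ (m, i)) - ∑ i ∈ Finset.Icc 1 m \ S, R₁ (m, i))) =
      (∑ S ∈ (Finset.Icc 1 m).powersetCard k,
        qpow t ((∑ i ∈ S, R₂ (m, i)) - ∑ i ∈ Finset.Icc 1 m \ S, R₂ (m, i))) := by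
    intro k hk1 hkm
    have h := hcon m k hk1 hkm hmn
    unfold gammaMK at h
    exact mul_left_cancel₀
      (mul_ne_zero (mul_ne_zero (hqfact k) (hqfact (m - k))) (qpow_ne_zero _ _)) h
  have hterm : ∀ (R : ℕ × ℕ → ℂ) (k : ℕ),
      (∑ S ∈ (Finset.Icc 1 m).powersetCard k,
        qpow t ((∑ i ∈ S, R (m, i)) - ∑ i ∈ Finset.Icc 1 m \ S, R (m, i))) =
      qpow t (-(∑ i ∈ Finset.Icc 1 m, R (m, i))) *
        ∑ S ∈ (Finset.Icc 1 m).powersetCard k, ∏ i ∈ S, qpow t (2 * R (m, i)) := by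
    intro R k
    rw [Finset.mul_sum]
    refine Finset.sum_congr rfl fun S hS => ?_
    have hsub : S ⊆ Finset.Icc 1 m := (Finset.mem_powersetCard.mp hS).1
    rw [Finset.sum_sdiff_eq_sub hsub, ← qpow_sum, ← qpow_add]
    congr 1
    rw [← Finset.mul_sum]
    ring
  have hcard : (Finset.Icc 1 m).card = m := by rw [Nat.card_Icc]; omega
  have hprodX : ∀ R : ℕ × ℕ → ℂ,
      (∑ S ∈ (Finset.Icc 1 m).powersetCard m, ∏ i ∈ S, qpow t (2 * R (m, i))) =
      qpow t (2 * ∑ i ∈ Finset.Icc 1 m, R (m, i)) := by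
    intro R
    have hps : (Finset.Icc 1 m).powersetCard m = {Finset.Icc 1 m} := by
      have h := Finset.powersetCard_self (Finset.Icc 1 m)
      rwa [hcard] at h
    rw [hps, Finset.sum_singleton, ← qpow_sum, ← Finset.mul_sum]
  have hT : qpow t (∑ i ∈ Finset.Icc 1 m, R₁ (m, i)) =
      qpow t (∑ i ∈ Finset.Icc 1 m, R₂ (m, i)) := by
    have h := hsum m hm1 le_rfl
    rw [hterm R₁ m, hterm R₂ m, hprodX R₁, hprodX R₂, ← qpow_add, ← qpow_add] at h
    convert h using 2 <;> ring
  have hTneg : qpow t (-(∑ i ∈ Finset.Icc 1 m, R₁ (m, i))) =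
      qpow t (-(∑ i ∈ Finset.Icc 1 m, R₂ (m, i))) := by
    rw [qpow_neg', qpow_neg', hT]
  have hE : ∀ k : ℕ,
      (∑ S ∈ (Finset.Icc 1 m).powersetCard k, ∏ i ∈ S, qpow t (2 * R₁ (m, i))) =
      (∑ S ∈ (Finset.Icc 1 m).powersetCard k, ∏ i ∈ S, qpow t (2 * R₂ (m, i))) := by
    intro k
    rcases Nat.eq_zero_or_pos k with rfl | hk
    · rw [Finset.powersetCard_zero]; simp
    rcases le_or_gt k m with hkm | hkm
    · have h := hsum k hk hkm
      rw [hterm R₁ k, hterm R₂ k, hTneg] at h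
      exact mul_left_cancel₀ (qpow_ne_zero _ _) h
    · rw [Finset.powersetCard_eq_empty.mpr (by rw [hcard]; exact hkm)]
      simp
  have hcards₁ : Multiset.card ((Finset.Icc 1 m).val.map fun i => qpow t (2 * R₁ (m, i))) = m := by
    rw [Multiset.card_map]; exact hcard
  have hcards₂ : Multiset.card ((Finset.Icc 1 m).val.map fun i => qpow t (2 * R₂ (m, i))) = m := by
    rw [Multiset.card_map]; exact hcard
  have hesymm : ∀ k, ((Finset.Icc 1 m).val.map fun i => qpow t (2 * R₁ (m, i))).esymm k =
      ((Finset.Icc 1 m).val.map fun i => qpow t (2 * R₂ (m, i))).esymm k := by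
    intro k
    rw [Finset.esymm_map_val, Finset.esymm_map_val]
    exact hE k
  have hMeq : ((Finset.Icc 1 m).val.map fun i => qpow t (2 * R₁ (m, i))) =
      ((Finset.Icc 1 m).val.map fun i => qpow t (2 * R₂ (m, i))) := by
    have hP : (((Finset.Icc 1 m).val.map fun i => qpow t (2 * R₁ (m, i))).map
          fun a => Polynomial.X - Polynomial.C a).prod =
        (((Finset.Icc 1 m).val.map fun i => qpow t (2 * R₂ (m, i))).map
          fun a => Polynomial.X - Polynomial.C a).prod := by
      apply Polynomial.ext
      intro k
      rcases le_or_gt k m with hkm | hkm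
      · rw [Multiset.prod_X_sub_C_coeff _ (by rw [hcards₁]; exact hkm),
          Multiset.prod_X_sub_C_coeff _ (by rw [hcards₂]; exact hkm), hcards₁, hcards₂,
          hesymm]
      · rw [Polynomial.coeff_eq_zero_of_natDegree_lt, Polynomial.coeff_eq_zero_of_natDegree_lt]
        · rw [Polynomial.natDegree_multiset_prod_X_sub_C_eq_card, hcards₂]; exact hkm
        · rw [Polynomial.natDegree_multiset_prod_X_sub_C_eq_card, hcards₁]; exact hkm
    have h := congrArg Polynomial.roots hP
    rwa [Polynomial.roots_multiset_prod_X_sub_C, Polynomial.roots_multiset_prod_X_sub_C] at h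
  -- Step 2: the class of i₀ and integer coordinates
  set B : ℂ := qpow t (2 * R₁ (m, i₀)) with hBdef
  have hB0 : B ≠ 0 := qpow_ne_zero _ _
  set Pr : ℂ → Prop := fun x => ∃ d : ℤ, x = B * qpow t (2 * (d : ℂ)) with hPrdef
  set S : Finset ℕ := (Finset.Icc 1 m).filter fun i => Pr (qpow t (2 * R₁ (m, i))) with hSdef
  have hi₀S : i₀ ∈ S := by
    rw [hSdef, Finset.mem_filter]
    refine ⟨Finset.mem_Icc.mpr ⟨hi₀1, hi₀m⟩, 0, ?_⟩
    push_cast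
    rw [mul_zero, qpow_zero', mul_one]
  have hXY : ∀ i : ℕ, qpow t (2 * R₂ (m, i)) =
      qpow t (2 * R₁ (m, i)) * qpow t (2 * ((z₂ (m, i) - z₁ (m, i) : ℤ) : ℂ)) := by
    intro i
    rw [← qpow_add]
    congr 1
    simp only [hR₁def, hR₂def, addShift]
    push_cast
    ring
  have hPrXY : ∀ i ∈ (Finset.Icc 1 m).val,
      (Pr (qpow t (2 * R₁ (m, i))) ↔ Pr (qpow t (2 * R₂ (m, i)))) := by
    intro i _
    simp only [hPrdef]
    constructor
    · rintro ⟨d, hd⟩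
      refine ⟨d + (z₂ (m, i) - z₁ (m, i)), ?_⟩
      rw [hXY i, hd, mul_assoc, ← qpow_add]
      congr 2
      push_cast
      ring
    · rintro ⟨d, hd⟩
      have hX : qpow t (2 * R₁ (m, i)) =
          qpow t (2 * R₂ (m, i)) * qpow t (-(2 * ((z₂ (m, i) - z₁ (m, i) : ℤ) : ℂ))) := by
        rw [hXY i, qpow_neg', mul_assoc, mul_inv_cancel₀ (qpow_ne_zero _ _), mul_one]
      refine ⟨d - (z₂ (m, i) - z₁ (m, i)), ?_⟩
      rw [hX, hd, mul_assoc, ← qpow_add]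
      congr 2
      push_cast
      ring
  have hSXY : S.val.map (fun i => qpow t (2 * R₁ (m, i))) =
      S.val.map (fun i => qpow t (2 * R₂ (m, i))) := by
    have h1 : S.val.map (fun i => qpow t (2 * R₁ (m, i))) =
        ((Finset.Icc 1 m).val.map fun i => qpow t (2 * R₁ (m, i))).filter Pr := by
      rw [hSdef, Finset.filter_val]
      exact (Multiset.filter_map Pr (fun i => qpow t (2 * R₁ (m, i))) (Finset.Icc 1 m).val).symm
    have h2 : S.val.map (fun i => qpow t (2 * R₂ (m, i))) =
        ((Finset.Icc 1 m).val.map fun i => qpow t (2 * R₂ (m, i))).filter Pr := by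
      rw [hSdef, Finset.filter_val, Multiset.filter_congr hPrXY]
      exact (Multiset.filter_map Pr (fun i => qpow t (2 * R₂ (m, i))) (Finset.Icc 1 m).val).symm
    rw [h1, h2, hMeq]
  have hex : ∀ i : ℕ, ∃ d : ℤ, i ∈ S → qpow t (2 * R₁ (m, i)) = B * qpow t (2 * (d : ℂ)) := by
    intro i
    by_cases h : i ∈ S
    · have h' := h
      rw [hSdef, Finset.mem_filter] at h'
      obtain ⟨d, hd⟩ := h'.2
      exact ⟨d, fun _ => hd⟩
    · exact ⟨0, fun h' => absurd h' h⟩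
  choose a ha using hex
  set b : ℕ → ℤ := fun i => a i + (z₂ (m, i) - z₁ (m, i)) with hbdef
  have hbY : ∀ i ∈ S, qpow t (2 * R₂ (m, i)) = B * qpow t (2 * ((b i : ℤ) : ℂ)) := by
    intro i hi
    rw [hXY i, ha i hi, mul_assoc, ← qpow_add]
    congr 1
    simp only [hbdef]
    push_cast
    ring
  have hmapab : S.val.map a = S.val.map b := by
    have ginj : Function.Injective (fun d : ℤ => B * qpow t (2 * (d : ℂ))) := by
      intro c d h
      simp only at h
      have h2 := mul_left_cancel₀ hB0 h
      have h3 : (2 * c : ℤ) = (2 * d : ℤ) := by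
        apply qpow_int_inj hq hroot
        have hc : ((2 * c : ℤ) : ℂ) = 2 * (c : ℂ) := by push_cast; ring
        have hd : ((2 * d : ℤ) : ℂ) = 2 * (d : ℂ) := by push_cast; ring
        rw [hc, hd]
        exact h2
      omega
    apply Multiset.map_injective ginj
    rw [Multiset.map_map, Multiset.map_map]
    have e1 : S.val.map ((fun d : ℤ => B * qpow t (2 * (d : ℂ))) ∘ a) =
        S.val.map (fun i => qpow t (2 * R₁ (m, i))) :=
      Multiset.map_congr rfl fun i hi => by
        simp only [Function.comp_apply]
        exact (ha i hi).symm
    have e2 : S.val.map ((fun d : ℤ => B * qpow t (2 * (d : ℂ))) ∘ b) =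
        S.val.map (fun i => qpow t (2 * R₂ (m, i))) :=
      Multiset.map_congr rfl fun i hi => by
        simp only [Function.comp_apply]
        exact (hbY i hi).symm
    rw [e1, e2, hSXY]
  -- Step 3: the order on the class is realization independent
  have hOrd : ∀ i ∈ S, ∀ j ∈ S, i ≠ j →
      (a i < a j ∧ b i < b j) ∨ (a j < a i ∧ b j < b i) := by
    intro i hi j hj hij
    have hiI : i ∈ Finset.Icc 1 m := by
      have h := hi; rw [hSdef, Finset.mem_filter] at h; exact h.1
    have hjI : j ∈ Finset.Icc 1 m := by
      have h := hj; rw [hSdef, Finset.mem_filter] at h; exact h.1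
    obtain ⟨hi1, him⟩ := Finset.mem_Icc.mp hiI
    obtain ⟨hj1, hjm⟩ := Finset.mem_Icc.mp hjI
    have hXdiff : qpow t (2 * (R₁ (m, i) - R₁ (m, j))) =
        qpow t ((2 * (a i - a j) : ℤ) : ℂ) :=
      qpow_diff_int hB0 (ha i hi) (ha j hj)
    have hdiffmem : R₁ (m, i) - R₁ (m, j) ∈ intHalf t := by
      refine ⟨a i - a j, 2 * (R₁ (m, i) - R₁ (m, j)) - ((2 * (a i - a j) : ℤ) : ℂ), ?_, ?_⟩
      · show qpow t _ = 1
        rw [qpow_sub', hXdiff, div_self (qpow_ne_zero _ _)]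
      · push_cast
        ring
    have hsc : SameComponent C (m, i) (m, j) :=
      hs₁.2 m i j hi1 him hj1 hjm hmn hij hdiffmem
    obtain ⟨D, hD, hvi, hvj⟩ := exists_isComponent hsc
      (fun hcc => hij (congrArg Prod.snd hcc))
    obtain ⟨-, hsucc, -, -, hiv⟩ := hCadm D hD
    obtain ⟨s₁, t₁, hst₁, hopt₁⟩ := hiv m i j hm1 hmn1 hvi hvj
    obtain ⟨s₂, t₂, hst₂, hopt₂⟩ := hiv m j i hm1 hmn1 hvj hvi
    rcases hopt₁ with h1 | h1
    · obtain ⟨e₁, e₂, -, -⟩ := h1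
      exact Or.inr ⟨opt1_lt hq hroot hs₁.1 (hD.1 e₁) (hD.1 e₂) hB0 (ha i hi) (ha j hj),
        opt1_lt hq hroot hs₂.1 (hD.1 e₁) (hD.1 e₂) hB0 (hbY i hi) (hbY j hj)⟩
    rcases hopt₂ with h2 | h2
    · obtain ⟨f₁, f₂, -, -⟩ := h2
      exact Or.inl ⟨opt1_lt hq hroot hs₁.1 (hD.1 f₁) (hD.1 f₂) hB0 (ha j hj) (ha i hi),
        opt1_lt hq hroot hs₂.1 (hD.1 f₁) (hD.1 f₂) hB0 (hbY j hj) (hbY i hi)⟩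
    · exfalso
      obtain ⟨e₁, e₂⟩ := h1
      obtain ⟨f₁, f₂⟩ := h2
      have hsu1 : Succ D (m + 1, t₁) (m + 1, s₂) :=
        ⟨(m, j), (m + 1, s₂),
          Relation.ReflTransGen.single ⟨⟨(m + 1, t₁), (m, j), false⟩, e₂, rfl, rfl⟩,
          ⟨⟨(m, j), (m + 1, s₂), true⟩, f₁, rfl, rfl, rfl⟩,
          Relation.ReflTransGen.refl⟩
      have hsu2 : Succ D (m + 1, t₂) (m + 1, s₁) :=
        ⟨(m, i), (m + 1, s₁),
          Relation.ReflTransGen.single ⟨⟨(m + 1, t₂), (m, i), false⟩, f₂, rfl, rfl⟩,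
          ⟨⟨(m, i), (m + 1, s₁), true⟩, e₁, rfl, rfl, rfl⟩,
          Relation.ReflTransGen.refl⟩
      have hlt1 := hsucc (m + 1) t₁ s₂ hsu1
      have hlt2 := hsucc (m + 1) t₂ s₁ hsu2
      omega
  -- Step 4: conclude
  have hordiff : ∀ i ∈ S, ∀ j ∈ S, (a i < a j ↔ b i < b j) := by
    intro i hi j hj
    by_cases hij : i = j
    · subst hij; omega
    · rcases hOrd i hi j hj hij with ⟨h1, h2⟩ | ⟨h1, h2⟩ <;> omega
  have hfin := eq_on_of_map_eq_of_orderIso S a b hmapab hordiff i₀ hi₀S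
  have hbb : b i₀ = a i₀ + (z₂ (m, i₀) - z₁ (m, i₀)) := by rw [hbdef]
  omega

end GT
end
end

section
/- Let 𝒞 be an admissible set of relations, T(L) a 𝒞-realization, and T(R), T(R') ∈ ℬ_𝒞(T(L)). Then there exist t ≥ 0, indices (i_s, j_s) with 1 ≤ j_s ≤ i_s ≤ n−1, and signs p_s ∈ {1, −1} (1 ≤ s ≤ t) such that, setting R₀ = R and R_s = R_{s−1} + p_s δ^{i_s j_s}, every T(R_s) lies in ℬ_𝒞(T(L)) and R_t = R'. In other words, any two tableaux of ℬ_𝒞(T(L)) are connected by a chain of single-entry shifts by ±1 staying inside ℬ_𝒞(T(L)). -/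
/- Common setup: relations between boxes of Gelfand–Tsetlin tableaux,
admissible sets of relations, tableaux satisfying relations, and the
Gelfand–Tsetlin operators on the space with basis `ℬ_𝒞(T(L))`. -/

noncomputable section

/-!
For each relation `r` of `𝒞`, the difference `l_src - l_tgt` is `m_r + y/2` with `m_r ∈ ℤ` and
`y ∈ 1(q)`, and `m_r` is well defined because `q` is not a root of unity. Hence an integer shift
`z` gives a tableau of `ℬ_𝒞(T(L))` exactly when it solves the difference constraints
`z_src - z_tgt ≥ ε_r - m_r` (`ε_r = 1` for strict relations, `0` otherwise), whose solution set is
closed under pointwise minimum. Admissibility makes the directed graph of `𝒞` acyclic: a cycle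
through a strict relation contradicts (i), and a cycle of non-strict relations stays in the top
row and contradicts (ii). Given solutions `w ≤ z`, lowering by one an entry where `z > w` that has
no relation pointing to another such entry keeps all constraints, so one walks down from `z` to
`w` in unit steps. Walking from `R` down to `min(R, R')` and then up to `R'` gives the chain.
-/

theorem Set.Finite.exists_forall_not_rel {α : Type*} {r : α → α → Prop}
    (hr : ∀ a, ¬ Relation.TransGen r a a) {s : Set α} (hs : s.Finite) (hne : s.Nonempty) :
    ∃ a ∈ s, ∀ b ∈ s, ¬ r a b := by
  have : IsStrictOrder α (fun x y => Relation.TransGen r y x) :=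
    { irrefl := hr, trans := fun _ _ _ hab hbc => hbc.trans hab }
  obtain ⟨⟨a, ha⟩, -, hmin⟩ :=
    (hs.wellFoundedOn (r := fun x y => Relation.TransGen r y x)).has_min Set.univ
      ⟨⟨_, hne.some_mem⟩, trivial⟩
  exact ⟨a, ha, fun b hb hab => hmin ⟨b, hb⟩ trivial (.single hab)⟩

namespace GT

section Arithmetic

variable {q t : ℂ}

theorem eq_zero_of_zpow_eq_one (hroot : ∀ m : ℕ, 0 < m → q ^ m ≠ 1) {k : ℤ}
    (hk : q ^ k = 1) : k = 0 := by
  obtain ⟨m, rfl | rfl⟩ := Int.eq_nat_or_neg k <;>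
  · by_contra hm
    exact hroot m (by omega) (by simpa [zpow_neg] using hk)

theorem intCast_eq_of_add_half_eq (hq : Complex.exp t = q)
    (hroot : ∀ m : ℕ, 0 < m → q ^ m ≠ 1) {m m' : ℤ} {y y' : ℂ} (hy : y ∈ oneQ t)
    (hy' : y' ∈ oneQ t) (h : (m : ℂ) + y / 2 = m' + y' / 2) : m = m' := by
  have hyy : t * y' = ((2 * (m - m') : ℤ) : ℂ) * t + t * y := by
    push_cast; linear_combination -2 * t * h
  have hpow : q ^ (2 * (m - m')) = 1 := by
    have h1 : Complex.exp (t * y) = 1 := hy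
    have h2 : Complex.exp (t * y') = 1 := hy'
    rwa [hyy, Complex.exp_add, Complex.exp_int_mul, h1, mul_one, hq] at h2
  linarith [eq_zero_of_zpow_eq_one hroot hpow]

theorem exists_intCast_add_half_iff (hq : Complex.exp t = q)
    (hroot : ∀ m : ℕ, 0 < m → q ^ m ≠ 1) {m : ℤ} {y : ℂ} (hy : y ∈ oneQ t) (P : ℤ → Prop) :
    (∃ m' : ℤ, P m' ∧ ∃ y' ∈ oneQ t, (m : ℂ) + y / 2 = m' + y' / 2) ↔ P m :=
  ⟨fun ⟨_, hm', _, hy', h⟩ => intCast_eq_of_add_half_eq hq hroot hy hy' h ▸ hm',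
    fun hm => ⟨m, hm, y, hy, rfl⟩⟩

theorem satisfiesRel_iff (hq : Complex.exp t = q) (hroot : ∀ m : ℕ, 0 < m → q ^ m ≠ 1)
    {L : ℕ × ℕ → ℂ} {r : GTRel} {m : ℤ} {y : ℂ} (hy : y ∈ oneQ t)
    (h : L r.src - L r.tgt = m + y / 2) :
    SatisfiesRel t L r ↔ (if r.strict then 1 else 0) ≤ m := by
  unfold SatisfiesRel
  rw [h]
  cases r.strict
  · exact exists_intCast_add_half_iff hq hroot hy (0 ≤ ·)
  · exact exists_intCast_add_half_iff hq hroot hy (0 < ·)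

theorem sub_mem_intHalf_of_satisfiesRel {L : ℕ × ℕ → ℂ} {r : GTRel}
    (h : SatisfiesRel t L r) : L r.src - L r.tgt ∈ intHalf t := by
  unfold SatisfiesRel at h
  split_ifs at h <;> obtain ⟨m, -, y, hy, e⟩ := h <;> exact ⟨m, y, hy, e⟩

theorem mem_intHalf_of_add_intCast {x : ℂ} (d : ℤ) (h : x + d ∈ intHalf t) :
    x ∈ intHalf t :=
  let ⟨m, y, hy, e⟩ := h
  ⟨m - d, y, hy, by push_cast; linear_combination e⟩

end Arithmetic

def DiffFeasible (C : Set GTRel) (b : GTRel → ℤ) (z : ℕ × ℕ → ℤ) : Prop :=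
  ∀ r ∈ C, b r ≤ z r.src - z r.tgt

def feasibleShifts (n : ℕ) (C : Set GTRel) (b : GTRel → ℤ) : Set (ℕ × ℕ → ℤ) :=
  {z | IsShift n z ∧ DiffFeasible C b z}

section Reduction

variable {n : ℕ} {q t : ℂ} {C : Set GTRel} {L : ℕ × ℕ → ℂ}

theorem exists_forall_satisfiesRel_addShift_iff (hq : Complex.exp t = q)
    (hroot : ∀ m : ℕ, 0 < m → q ^ m ≠ 1) (hL : ∀ r ∈ C, SatisfiesRel t L r) :
    ∃ b : GTRel → ℤ, ∀ z, (∀ r ∈ C, SatisfiesRel t (addShift L z) r) ↔ DiffFeasible C b z := by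
  choose! M Y hY hM using fun r (hr : r ∈ C) => sub_mem_intHalf_of_satisfiesRel (hL r hr)
  refine ⟨fun r => (if r.strict then 1 else 0) - M r, fun z => forall₂_congr fun r hr => ?_⟩
  rw [satisfiesRel_iff hq hroot (hY r hr) (m := M r + z r.src - z r.tgt)
    (by simp only [addShift]; push_cast; linear_combination hM r hr)]
  dsimp only
  omega

theorem satisfiesSet_addShift_iff (hL : SatisfiesSet n t C L) (z : ℕ × ℕ → ℤ) :
    SatisfiesSet n t C (addShift L z) ↔ ∀ r ∈ C, SatisfiesRel t (addShift L z) r := by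
  refine ⟨And.left, fun h => ⟨h, fun k i j h₁ h₂ h₃ h₄ h₅ h₆ hmem => ?_⟩⟩
  refine hL.2 k i j h₁ h₂ h₃ h₄ h₅ h₆ (mem_intHalf_of_add_intCast (z (k, i) - z (k, j)) ?_)
  convert hmem using 1
  simp only [addShift]; push_cast; ring

theorem exists_BSet_eq_image_feasibleShifts (hq : Complex.exp t = q)
    (hroot : ∀ m : ℕ, 0 < m → q ^ m ≠ 1) (hL : SatisfiesSet n t C L) :
    ∃ b, BSet n t C L = addShift L '' feasibleShifts n C b := by
  obtain ⟨b, hb⟩ := exists_forall_satisfiesRel_addShift_iff hq hroot hL.1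
  refine ⟨b, Set.ext fun R => ⟨?_, ?_⟩⟩
  · rintro ⟨⟨z, hz, rfl⟩, hR⟩
    exact ⟨z, ⟨hz, (hb z).1 ((satisfiesSet_addShift_iff hL z).1 hR)⟩, rfl⟩
  · rintro ⟨z, ⟨hz, hf⟩, rfl⟩
    exact ⟨⟨z, hz, rfl⟩, (satisfiesSet_addShift_iff hL z).2 ((hb z).2 hf)⟩

end Reduction

section Acyclic

open Relation

variable {n : ℕ} {C C₁ C₂ : Set GTRel} {a b : ℕ × ℕ}

def Linked (C : Set GTRel) (x y : ℕ × ℕ) : Prop :=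
  ∃ r ∈ C, (r.src = x ∨ r.tgt = x) ∧ (r.src = y ∨ r.tgt = y)

def componentAt (C : Set GTRel) (a : ℕ × ℕ) : Set GTRel :=
  {r | r ∈ C ∧ ReflTransGen (Linked C) a r.src}

theorem mem_componentAt {r : GTRel} {v : ℕ × ℕ} (hr : r ∈ C) (hv : r.src = v ∨ r.tgt = v)
    (ha : ReflTransGen (Linked C) a v) : r ∈ componentAt C a :=
  ⟨hr, ha.tail ⟨r, hr, hv, Or.inl rfl⟩⟩

theorem reflTransGen_of_mem_componentAt {r : GTRel} {v : ℕ × ℕ} (hr : r ∈ componentAt C a)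
    (hv : r.src = v ∨ r.tgt = v) : ReflTransGen (Linked C) a v :=
  hr.2.tail ⟨r, hr.1, Or.inl rfl, hv⟩

theorem not_nonempty_of_componentAt_eq_union (hdisj : Disconnected C₁ C₂)
    (heq : componentAt C a = C₁ ∪ C₂) (ha : a ∉ vertexSet C₂) : ¬ C₂.Nonempty := by
  have hreach : ∀ v, ReflTransGen (Linked C) a v → v ∉ vertexSet C₂ := by
    intro v hv
    induction hv with
    | refl => exact ha
    | @tail x y hx hxy ih =>
      obtain ⟨r, hr, hrx, hry⟩ := hxy
      have hr₁ : r ∈ C₁ := by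
        rcases (heq ▸ mem_componentAt hr hrx hx : r ∈ C₁ ∪ C₂) with h | h
        · exact h
        · exact absurd ⟨r, h, hrx⟩ ih
      exact fun hy => (Set.eq_empty_iff_forall_notMem.1 hdisj) y ⟨⟨r, hr₁, hry⟩, hy⟩
  rintro ⟨r, hr⟩
  have hrD : r ∈ componentAt C a := heq ▸ Or.inr hr
  exact hreach r.src (reflTransGen_of_mem_componentAt hrD (Or.inl rfl)) ⟨r, hr, Or.inl rfl⟩

theorem isComponent_componentAt (ha : a ∈ vertexSet C) : IsComponent C (componentAt C a) := by
  obtain ⟨r₀, hr₀, hv₀⟩ := ha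
  have hr₀D : r₀ ∈ componentAt C a := mem_componentAt hr₀ hv₀ .refl
  refine ⟨fun r hr => hr.1, ⟨⟨r₀, hr₀D⟩, fun C₁ C₂ h₁ h₂ hdisj heq => ?_⟩, ?_⟩
  · have hdisj' : Disconnected C₂ C₁ := by rw [Disconnected, Set.inter_comm]; exact hdisj
    rcases (heq ▸ hr₀D : r₀ ∈ C₁ ∪ C₂) with h | h
    · refine not_nonempty_of_componentAt_eq_union hdisj heq (fun ha₂ => ?_) h₂
      exact (Set.eq_empty_iff_forall_notMem.1 hdisj) a ⟨⟨r₀, h, hv₀⟩, ha₂⟩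
    · refine not_nonempty_of_componentAt_eq_union hdisj' (heq.trans (Set.union_comm _ _))
        (fun ha₁ => ?_) h₁
      exact (Set.eq_empty_iff_forall_notMem.1 hdisj') a ⟨⟨r₀, h, hv₀⟩, ha₁⟩
  · refine Set.eq_empty_iff_forall_notMem.2 fun v ⟨⟨r, hr, hv⟩, ⟨r', hr', hv'⟩⟩ => hr'.2 ?_
    exact mem_componentAt hr'.1 hv' (reflTransGen_of_mem_componentAt hr hv)

theorem transGen_stepRel_componentAt (h : TransGen (stepRel C) a b) :
    TransGen (stepRel (componentAt C a)) a b := by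
  have hlift : ∀ {x y}, ReflTransGen (Linked C) a x → stepRel C x y →
      stepRel (componentAt C a) x y ∧ ReflTransGen (Linked C) a y :=
    fun hx ⟨r, hr, hs, ht⟩ =>
      ⟨⟨r, mem_componentAt hr (Or.inl hs) hx, hs, ht⟩, hx.tail ⟨r, hr, Or.inl hs, Or.inr ht⟩⟩
  suffices TransGen (stepRel (componentAt C a)) a b ∧ ReflTransGen (Linked C) a b from this.1
  induction h with
  | single hab => exact (hlift .refl hab).imp .single id
  | tail _ hbc ih => exact (hlift ih.2 hbc).imp ih.1.tail id

def NonstrictStep (C : Set GTRel) (x y : ℕ × ℕ) : Prop :=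
  ∃ r ∈ C, r.src = x ∧ r.tgt = y ∧ r.strict = false

theorem transGen_stepRel_of_transGen_nonstrictStep (h : TransGen (NonstrictStep C) a b) :
    TransGen (stepRel C) a b :=
  TransGen.mono (fun _ _ ⟨r, hr, hs, ht, _⟩ => ⟨r, hr, hs, ht⟩) _ _ h

theorem succ_or_transGen_nonstrictStep (h : TransGen (stepRel C) a b) :
    Succ C a b ∨ TransGen (NonstrictStep C) a b := by
  induction h with
  | @single c hac =>
    obtain ⟨r, hr, hs, ht⟩ := hac
    cases hstrict : r.strict
    · exact .inr (.single ⟨r, hr, hs, ht, hstrict⟩)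
    · exact .inl ⟨a, c, .refl, ⟨r, hr, hs, ht, hstrict⟩, .refl⟩
  | @tail c d _ hcd ih =>
    obtain ⟨r, hr, hs, ht⟩ := hcd
    rcases ih with ⟨x, y, hax, hxy, hyc⟩ | hac
    · exact .inl ⟨x, y, hax, hxy, hyc.tail ⟨r, hr, hs, ht⟩⟩
    · cases hstrict : r.strict
      · exact .inr (hac.tail ⟨r, hr, hs, ht, hstrict⟩)
      · exact .inl ⟨c, d, (transGen_stepRel_of_transGen_nonstrictStep hac).to_reflTransGen,
          ⟨r, hr, hs, ht, hstrict⟩, .refl⟩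

theorem row_lt_or_eq_of_transGen_nonstrictStep (hC : C ⊆ RelSet n)
    (h : TransGen (NonstrictStep C) a b) : b.1 < a.1 ∨ (a.1 = n ∧ b.1 = n) := by
  have hstep : ∀ {x y}, NonstrictStep C x y → y.1 < x.1 ∨ (x.1 = n ∧ y.1 = n) := by
    rintro x y ⟨r, hr, rfl, rfl, hns⟩
    rcases hC hr with ⟨i, j, j', _, _, _, _, _, rfl⟩ | ⟨_, _, _, _, _, _, _, _, rfl⟩ |
      ⟨_, _, _, _, _, _, _, rfl⟩
    · left; dsimp only; omega
    · simp at hns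
    · right; exact ⟨rfl, rfl⟩
  induction h with
  | single hab => exact hstep hab
  | tail _ hbc ih => have := hstep hbc; omega

theorem not_transGen_stepRel_self (hC : C ⊆ RelSet n) (hCadm : Admissible n C)
    (a : ℕ × ℕ) : ¬ TransGen (stepRel C) a a := by
  intro h
  obtain ⟨_, ⟨r, hr, hs, -⟩, -⟩ := TransGen.head'_iff.1 h
  have hD := hCadm _ (isComponent_componentAt ⟨r, hr, Or.inl hs⟩)
  rcases succ_or_transGen_nonstrictStep (transGen_stepRel_componentAt h) with hsucc | hns
  · exact lt_irrefl _ (hD.2.1 a.1 a.2 a.2 hsucc)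
  · obtain ⟨k, i⟩ := a
    obtain rfl : k = n := by
      have := row_lt_or_eq_of_transGen_nonstrictStep (fun r hr => hC hr.1) hns; omega
    exact lt_irrefl _ (hD.2.2.1 i i (transGen_stepRel_of_transGen_nonstrictStep hns))

end Acyclic

section Paths

open Relation

variable {X ι : Type*} {D : Set X} {f : ι → X} {I : Set ι} {x y : X}

def StepWithin [Add X] (D : Set X) (f : ι → X) (I : Set ι) (u v : X) : Prop :=
  u ∈ D ∧ v ∈ D ∧ ∃ i ∈ I, v = u + f i

theorem reflTransGen_stepWithin_symm [AddGroup X] (hI : ∀ i ∈ I, ∃ j ∈ I, f j = -f i)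
    (h : ReflTransGen (StepWithin D f I) x y) : ReflTransGen (StepWithin D f I) y x := by
  have : Std.Symm (StepWithin D f I) := ⟨fun u v ⟨hu, hv, i, hi, huv⟩ => by
    obtain ⟨j, hj, hfj⟩ := hI i hi
    exact ⟨hv, hu, j, hj, by rw [hfj, huv, add_neg_cancel_right]⟩⟩
  exact Std.Symm.symm _ _ h

theorem exists_sum_of_reflTransGen_stepWithin [AddCommMonoid X] [Nonempty ι] (hx : x ∈ D)
    (h : ReflTransGen (StepWithin D f I) x y) :
    ∃ (N : ℕ) (g : ℕ → ι), (∀ s < N, g s ∈ I) ∧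
      (∀ s ≤ N, x + ∑ u ∈ Finset.range s, f (g u) ∈ D) ∧
      x + ∑ u ∈ Finset.range N, f (g u) = y := by
  induction h with
  | refl => exact ⟨0, fun _ => Classical.arbitrary ι, by simp, by simpa using hx, by simp⟩
  | tail _ hyz ih =>
    obtain ⟨N, g, hgI, hgD, hgN⟩ := ih
    obtain ⟨-, hz, i, hi, rfl⟩ := hyz
    have hsum : ∀ s ≤ N, ∑ u ∈ Finset.range s, f (Function.update g N i u) =
        ∑ u ∈ Finset.range s, f (g u) := fun s hs =>
      Finset.sum_congr rfl fun u hu => by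
        rw [Function.update_of_ne (by simp at hu; omega)]
    refine ⟨N + 1, Function.update g N i, fun s hs => ?_, fun s hs => ?_, ?_⟩
    · rcases (by omega : s < N ∨ s = N) with hs | rfl
      · rw [Function.update_of_ne hs.ne]; exact hgI s hs
      · rwa [Function.update_self]
    · rcases (by omega : s ≤ N ∨ s = N + 1) with hs | rfl
      · rw [hsum s hs]; exact hgD s hs
      · rwa [Finset.sum_range_succ, hsum N le_rfl, Function.update_self, ← add_assoc, hgN]
    · rw [Finset.sum_range_succ, hsum N le_rfl, Function.update_self, ← add_assoc, hgN]

end Paths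

section Descent

open Relation

variable {n : ℕ} {C : Set GTRel} {b : GTRel → ℤ} {z w : ℕ × ℕ → ℤ} {a : ℕ × ℕ}

def IsFreeBox (n : ℕ) (a : ℕ × ℕ) : Prop := 1 ≤ a.2 ∧ a.2 ≤ a.1 ∧ a.1 ≤ n - 1

def unitShifts (n : ℕ) : Set ((ℕ × ℕ) × ℤ) := {i | (i.2 = 1 ∨ i.2 = -1) ∧ IsFreeBox n i.1}

def singleShift (i : (ℕ × ℕ) × ℤ) : ℕ × ℕ → ℤ := Pi.single i.1 i.2

def board (n : ℕ) : Finset (ℕ × ℕ) := Finset.range n ×ˢ Finset.range n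

theorem mem_board_of_isFreeBox (ha : IsFreeBox n a) : a ∈ board n := by
  obtain ⟨h₁, h₂, h₃⟩ := ha
  simp only [board, Finset.mem_product, Finset.mem_range]
  omega

theorem IsShift.isFreeBox_of_ne (hz : IsShift n z) (hw : IsShift n w) (h : z a ≠ w a) :
    IsFreeBox n a := by
  by_cases hza : z a = 0
  · exact hw a (by omega)
  · exact hz a hza

theorem IsShift.inf (hz : IsShift n z) (hw : IsShift n w) : IsShift n (z ⊓ w) := fun a ha => by
  by_cases hza : z a = 0
  · exact hw a fun hwa => ha (by simp [hza, hwa])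
  · exact hz a hza

theorem IsShift.add_single (hz : IsShift n z) (ha : IsFreeBox n a)
    (e : ℤ) : IsShift n (z + Pi.single a e) := fun x hx => by
  by_cases hxa : x = a
  · exact hxa ▸ ha
  · exact hz x (by simpa [hxa] using hx)

theorem DiffFeasible.inf (hz : DiffFeasible C b z) (hw : DiffFeasible C b w) :
    DiffFeasible C b (z ⊓ w) := fun r hr => by
  have := hz r hr; have := hw r hr
  simp only [Pi.inf_apply]; omega

theorem DiffFeasible.exists_add_single_neg_one (hacyc : ∀ a, ¬ TransGen (stepRel C) a a)
    (hw : DiffFeasible C b w) (hz : DiffFeasible C b z) (hle : w ≤ z)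
    (hfin : {a | w a < z a}.Finite) (hne : w ≠ z) :
    ∃ a, w a < z a ∧ DiffFeasible C b (z + Pi.single a (-1)) := by
  have hS : {a | w a < z a}.Nonempty := by
    by_contra h
    exact hne (funext fun a => le_antisymm (hle a) (not_lt.1 fun h' => h ⟨a, h'⟩))
  obtain ⟨a, ha, hmin⟩ := hfin.exists_forall_not_rel hacyc hS
  refine ⟨a, ha, fun r hr => ?_⟩
  have hzr := hz r hr
  simp only [Pi.add_apply, Pi.single_apply]
  by_cases hsa : r.src = a
  · have htgt : ¬ w r.tgt < z r.tgt := fun h => hmin r.tgt h ⟨r, hr, hsa, rfl⟩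
    have hta : r.tgt ≠ a := fun h => htgt (h ▸ ha)
    have hwr := hw r hr
    have := hle r.tgt
    rw [if_pos hsa, if_neg hta]
    rw [hsa] at hzr hwr ⊢
    change w a < z a at ha
    omega
  · rw [if_neg hsa]
    split_ifs <;> omega

theorem reflTransGen_stepWithin_of_le (hacyc : ∀ a, ¬ TransGen (stepRel C) a a)
    (hw : w ∈ feasibleShifts n C b) (hz : z ∈ feasibleShifts n C b) (hle : w ≤ z) :
    ReflTransGen (StepWithin (feasibleShifts n C b) singleShift (unitShifts n)) z w := by
  obtain ⟨k, hk⟩ : ∃ k : ℕ, ∑ a ∈ board n, (z a - w a) = k :=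
    ⟨_, (Int.toNat_of_nonneg (Finset.sum_nonneg fun a _ => sub_nonneg.2 (hle a))).symm⟩
  induction k using Nat.strong_induction_on generalizing z with
  | _ k ih =>
  by_cases hwz : w = z
  · exact hwz ▸ .refl
  have hfin : {a | w a < z a}.Finite := (board n).finite_toSet.subset fun a ha =>
    mem_board_of_isFreeBox (hz.1.isFreeBox_of_ne hw.1 (ne_of_gt ha))
  obtain ⟨a, ha, hfeas⟩ := hw.2.exists_add_single_neg_one hacyc hz.2 hle hfin hwz
  have hbox := hz.1.isFreeBox_of_ne hw.1 ha.ne'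
  have hz' : z + Pi.single a (-1) ∈ feasibleShifts n C b := ⟨hz.1.add_single hbox _, hfeas⟩
  have hle' : w ≤ z + Pi.single a (-1) := fun x => by
    by_cases hxa : x = a
    · subst hxa; simp only [Pi.add_apply, Pi.single_eq_same]; change w x < z x at ha; omega
    · simpa [hxa] using hle x
  have hk' : ∑ x ∈ board n, ((z + Pi.single a (-1) : ℕ × ℕ → ℤ) x - w x) = k - 1 := by
    simp only [Pi.add_apply, add_sub_right_comm, Finset.sum_add_distrib, hk,
      Finset.sum_pi_single', if_pos (mem_board_of_isFreeBox hbox)]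
    ring
  have hk1 : 1 ≤ k := by
    have := Finset.sum_nonneg fun x (_ : x ∈ board n) => sub_nonneg.2 (hle' x)
    omega
  exact .head ⟨hz, hz', (a, -1), ⟨.inr rfl, hbox⟩, rfl⟩
    (ih (k - 1) (by omega) hz' hle' (by rw [hk']; push_cast [hk1]; ring))

theorem reflTransGen_stepWithin_of_mem (hacyc : ∀ a, ¬ TransGen (stepRel C) a a)
    (hz : z ∈ feasibleShifts n C b) (hw : w ∈ feasibleShifts n C b) :
    ReflTransGen (StepWithin (feasibleShifts n C b) singleShift (unitShifts n)) z w := by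
  have hinf : z ⊓ w ∈ feasibleShifts n C b := ⟨hz.1.inf hw.1, hz.2.inf hw.2⟩
  have hneg : ∀ i ∈ unitShifts n, ∃ j ∈ unitShifts n, singleShift j = -singleShift i :=
    fun i ⟨hsign, hbox⟩ => ⟨(i.1, -i.2), ⟨by omega, hbox⟩, Pi.single_neg _ _⟩
  exact (reflTransGen_stepWithin_of_le hacyc hinf hz inf_le_left).trans
    (reflTransGen_stepWithin_symm hneg (reflTransGen_stepWithin_of_le hacyc hinf hw inf_le_right))

end Descent

theorem addShift_add_sum_singleShift (L : ℕ × ℕ → ℂ) (z : ℕ × ℕ → ℤ)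
    (g : ℕ → (ℕ × ℕ) × ℤ) (s : ℕ) :
    addShift L (z + ∑ u ∈ Finset.range s, singleShift (g u)) = fun pt =>
      addShift L z pt + ∑ u ∈ Finset.range s, ((g u).2 : ℂ) * deltaT (g u).1.1 (g u).1.2 pt := by
  funext pt
  simp only [addShift, Pi.add_apply, Finset.sum_apply, singleShift, Pi.single_apply, deltaT,
    Prod.mk.eta]
  push_cast [apply_ite]
  simp only [mul_one, mul_zero, add_assoc]

end GT

open GT in
theorem basis_connected_by_single_shifts_general
    (n : ℕ) (q t : ℂ) (hq : Complex.exp t = q)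
    (hroot : ∀ m : ℕ, 0 < m → q ^ m ≠ 1)
    (C : Set GTRel) (hC : C ⊆ RelSet n) (hCadm : Admissible n C)
    (L : ℕ × ℕ → ℂ) (hL : SatisfiesSet n t C L)
    (R R' : ℕ × ℕ → ℂ) (hR : R ∈ BSet n t C L) (hR' : R' ∈ BSet n t C L) :
    ∃ (N : ℕ) (idx : ℕ → ℕ × ℕ) (p : ℕ → ℤ),
      (∀ s, s < N → (p s = 1 ∨ p s = -1) ∧
        1 ≤ (idx s).2 ∧ (idx s).2 ≤ (idx s).1 ∧ (idx s).1 ≤ n - 1) ∧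
      (∀ s, s ≤ N →
        (fun pt => R pt + ∑ u ∈ Finset.range s, (p u : ℂ) * deltaT (idx u).1 (idx u).2 pt)
          ∈ BSet n t C L) ∧
      (fun pt => R pt + ∑ u ∈ Finset.range N, (p u : ℂ) * deltaT (idx u).1 (idx u).2 pt)
        = R' := by
  obtain ⟨b, hB⟩ := exists_BSet_eq_image_feasibleShifts hq hroot hL
  rw [hB] at hR hR' ⊢
  obtain ⟨z, hz, rfl⟩ := hR
  obtain ⟨z', hz', rfl⟩ := hR'
  obtain ⟨N, g, hgI, hgF, hgN⟩ := exists_sum_of_reflTransGen_stepWithin hz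
    (reflTransGen_stepWithin_of_mem (not_transGen_stepRel_self hC hCadm) hz hz')
  refine ⟨N, fun u => (g u).1, fun u => (g u).2, hgI, fun s hs => ?_, ?_⟩
  · rw [← addShift_add_sum_singleShift]
    exact ⟨_, hgF s hs, rfl⟩
  · rw [← addShift_add_sum_singleShift, hgN]

open GT in
/-- any two tableaux of `ℬ_𝒞(T(L))` are connected by a chain of
single-entry shifts by `±1` staying inside `ℬ_𝒞(T(L))`. -/
theorem basis_connected_by_single_shifts
    (n : ℕ) (hn : 2 ≤ n) (q t : ℂ) (hq : Complex.exp t = q)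
    (hroot : ∀ m : ℕ, 0 < m → q ^ m ≠ 1)
    (C : Set GTRel) (hC : C ⊆ RelSet n) (hCadm : Admissible n C)
    (L : ℕ × ℕ → ℂ) (hL : SatisfiesSet n t C L)
    (R R' : ℕ × ℕ → ℂ) (hR : R ∈ BSet n t C L) (hR' : R' ∈ BSet n t C L) :
    ∃ (N : ℕ) (idx : ℕ → ℕ × ℕ) (p : ℕ → ℤ),
      (∀ s, s < N → (p s = 1 ∨ p s = -1) ∧
        1 ≤ (idx s).2 ∧ (idx s).2 ≤ (idx s).1 ∧ (idx s).1 ≤ n - 1) ∧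
      (∀ s, s ≤ N →
        (fun pt => R pt + ∑ u ∈ Finset.range s, (p u : ℂ) * deltaT (idx u).1 (idx u).2 pt)
          ∈ BSet n t C L) ∧
      (fun pt => R pt + ∑ u ∈ Finset.range N, (p u : ℂ) * deltaT (idx u).1 (idx u).2 pt)
        = R' :=
  basis_connected_by_single_shifts_general n q t hq hroot C hC hCadm L hL R R' hR hR'
end
end
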